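/- arXiv:1301.2045 — 9 statements merged into one kernel-verified Lean document; each statement's English description precedes it below -/
import Mathlib

section
/- Let K be a number field of degree n over ℚ with ring of integers O_K, and let O_{K,n} = {α ∈ O_K : [ℚ(α):ℚ] = n} be the set of algebraic integers of K of degree n. Then Int(O_{K,n}, O_K) = Int(O_K); that is, every polynomial h ∈ K[X] with h(O_{K,n}) ⊆ O_K satisfies h(O_K) ⊆ O_K (O_{K,n} is polynomially dense in O_K). -/
/-!
Let `θ` be an integral primitive element of `K`. As `K/ℚ` has only finitely many intermediate
fields, `α + mθ` generates `K`, i.e. has degree `n`, for all but finitely many integers `m`.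
Hence, if `h(O_{K,n}) ⊆ O_K` and `α ∈ O_K`, the polynomial `g(X) = h(α + θX)` takes values in
`O_K` at all large integers. Going down with forward differences and inducting on the degree,
a polynomial whose values at all large integers lie in an additive subgroup has its values at
all integers there; in particular `h(α) = g(0) ∈ O_K`.
-/

open Polynomial IntermediateField Filter

section fwdDiff

variable {M M' G : Type*} [AddCommMonoid M] [AddCommMonoid M'] [AddCommGroup G]

theorem fwdDiff_iter_comp_addMonoidHom (φ : M →+ M') (f : M' → G) (h : M) (n : ℕ) :
    (fwdDiff h)^[n] (f ∘ φ) = (fwdDiff (φ h))^[n] f ∘ φ := by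
  funext y
  simp [fwdDiff_iter_eq_sum_shift]

theorem AddSubgroup.apply_mem_of_fwdDiff_iter_eq_zero {A : AddSubgroup G} {n : ℕ} {f : ℤ → G}
    (hf : (fwdDiff 1)^[n] f = 0) (hA : ∀ᶠ m in atTop, f m ∈ A) (m : ℤ) : f m ∈ A := by
  induction n generalizing f m with
  | zero => simp [show f = 0 from hf, A.zero_mem]
  | succ n ih =>
    have hshift : ∀ᶠ m in atTop, f (m + 1) ∈ A :=
      (tendsto_atTop_add_const_right _ 1 tendsto_id).eventually hA
    have hΔ : ∀ m, fwdDiff 1 f m ∈ A :=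
      ih hf ((hshift.and hA).mono fun m hm => A.sub_mem hm.1 hm.2)
    clear ih
    obtain ⟨M, hM⟩ := hA.exists_forall_of_atTop
    rcases le_total M m with hm | hm
    · exact hM m hm
    · induction m, hm using Int.leInductionDown with
      | base => exact hM M le_rfl
      | pred k _ hk => simpa [fwdDiff] using A.sub_mem hk (hΔ (k - 1))

end fwdDiff

theorem Polynomial.eval_intCast_mem_of_eventually_mem {R : Type*} [CommRing R]
    {A : AddSubgroup R} (P : R[X]) (hP : ∀ᶠ m : ℤ in atTop, P.eval (m : R) ∈ A) (m : ℤ) :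
    P.eval (m : R) ∈ A := by
  refine A.apply_mem_of_fwdDiff_iter_eq_zero (f := P.eval ∘ Int.castAddHom R)
    (n := P.natDegree + 1) ?_ hP m
  rw [fwdDiff_iter_comp_addMonoidHom, show Int.castAddHom R 1 = 1 from Int.cast_one,
    P.fwdDiff_iter_degree_add_one_eq_zero]
  rfl

theorem IntermediateField.eventually_adjoin_add_smul_eq_top {F E : Type*} [Field F] [Field E]
    [Algebra F E] [Finite (IntermediateField F E)] {θ : E} (hθ : F⟮θ⟯ = ⊤) (α : E) :
    ∀ᶠ c : F in cofinite, F⟮α + c • θ⟯ = ⊤ := by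
  refine Set.Finite.of_finite_image (f := fun c : F => F⟮α + c • θ⟯) (Set.toFinite _)
    fun c hc d _ hcd => ?_
  by_contra hne
  refine hc (eq_top_iff.mpr ?_)
  rw [← hθ, adjoin_simple_le_iff]
  have hd : α + d • θ ∈ F⟮α + c • θ⟯ :=
    (show F⟮α + c • θ⟯ = F⟮α + d • θ⟯ from hcd) ▸ mem_adjoin_simple_self F _
  have hsub : (c - d) • θ ∈ F⟮α + c • θ⟯ := by
    convert sub_mem (mem_adjoin_simple_self F (α + c • θ)) hd using 1
    rw [sub_smul]; abel
  simpa [smul_smul, inv_mul_cancel₀ (sub_ne_zero.mpr hne)] using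
    smul_mem _ hsub (x := (c - d)⁻¹)

theorem NumberField.exists_isIntegral_primitive_element (K : Type*) [Field K] [NumberField K] :
    ∃ θ : K, IsIntegral ℤ θ ∧ ℚ⟮θ⟯ = ⊤ := by
  obtain ⟨θ, hθ⟩ := Field.exists_primitive_element ℚ K
  have : Algebra.IsAlgebraic ℤ K :=
    IsFractionRing.comap_isAlgebraic_iff (K := ℚ).mpr inferInstance
  obtain ⟨y, hy, hyθ⟩ := (Algebra.IsAlgebraic.isAlgebraic (R := ℤ) θ).exists_integral_multiple
  refine ⟨y • θ, hyθ, eq_top_iff.mpr (hθ ▸ adjoin_simple_le_iff.mpr ?_)⟩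
  rw [← Int.cast_smul_eq_zsmul ℚ]
  simpa [smul_smul, inv_mul_cancel₀ (Int.cast_ne_zero.mpr hy : (y : ℚ) ≠ 0)] using
    smul_mem _ (mem_adjoin_simple_self ℚ ((y : ℚ) • θ)) (x := (y : ℚ)⁻¹)

/-- Let `K` be a number field of degree `n` over `ℚ` with ring of integers
`O_K`, and let `O_{K,n} = {α ∈ O_K : [ℚ(α):ℚ] = n}` be the set of algebraic integers of `K`
of degree `n`. Then `Int(O_{K,n}, O_K) = Int(O_K)`: every polynomial `h ∈ K[X]` mapping
`O_{K,n}` into `O_K` maps all of `O_K` into `O_K`, i.e. `O_{K,n}` is polynomially dense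
in `O_K`.  Here membership in `O_K` is expressed as being integral over `ℤ`, and the degree
of `α` is the degree of its minimal polynomial over `ℚ`. -/
theorem stmt_0 (K : Type*) [Field K] [NumberField K] (n : ℕ)
    (hn : Module.finrank ℚ K = n) :
    {h : Polynomial K | ∀ α : K, IsIntegral ℤ α → (minpoly ℚ α).natDegree = n →
        IsIntegral ℤ (h.eval α)} =
      {h : Polynomial K | ∀ α : K, IsIntegral ℤ α → IsIntegral ℤ (h.eval α)} := by
  refine Set.ext fun h => ⟨fun H α hα => ?_, fun H α hα _ => H α hα⟩
  obtain ⟨θ, hθint, hθ⟩ := NumberField.exists_isIntegral_primitive_element K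
  have := Field.finite_intermediateField_of_exists_primitive_element ℚ K ⟨θ, hθ⟩
  have hprim : ∀ᶠ m : ℤ in atTop, ℚ⟮α + m • θ⟯ = ⊤ := by
    simpa only [Int.cast_smul_eq_zsmul] using
      (Int.cast_injective.tendsto_cofinite.eventually
        (eventually_adjoin_add_smul_eq_top hθ α)).filter_mono atTop_le_cofinite
  have hline : ∀ᶠ m : ℤ in atTop, IsIntegral ℤ (h.eval (α + m • θ)) :=
    hprim.mono fun m hm => H _ (hα.add (hθint.zsmul m))
      (((Field.primitive_element_iff_minpoly_natDegree_eq ℚ _).mp hm).trans hn)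
  have hg := (h.comp (C α + C θ * X)).eval_intCast_mem_of_eventually_mem
    (A := (integralClosure ℤ K).toSubring.toAddSubgroup)
    (by simpa [mem_integralClosure_iff, zsmul_eq_mul, mul_comm θ] using hline) 0
  simpa [mem_integralClosure_iff] using hg
end

section
/- Int_ℚ(A_n, 𝒜_n) = Int_ℚ(𝒜_n): a polynomial f ∈ ℚ[X] satisfies f(α) integral over ℤ for every algebraic integer α of degree at most n if and only if f(α) is integral over ℤ for every algebraic integer α of degree exactly n. In particular, if f ∈ ℚ[X] maps every algebraic integer of degree exactly n to an algebraic integer, then it also maps every algebraic integer of degree smaller than n to an algebraic integer. -/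
/-!
Let `α` be an algebraic integer with minimal polynomial `μ ∈ ℤ[X]` of degree `m ≤ n`, and write
`f = g / N` with `g ∈ ℤ[X]`. By Eisenstein's criterion at a prime not dividing `N` there is a monic
irreducible `G ∈ ℤ[X]` of degree `n` with `G ≡ μ X ^ (n - m)` modulo `N ^ n`; its roots `βᵢ` are
algebraic integers of degree exactly `n`, so every `f(βᵢ)` is integral. Since `α - βᵢ` divides
`g(α) - g(βᵢ)` among algebraic integers and `∏ (α - βᵢ) = G(α) ∈ N ^ n ℤ[α]`, the product
`∏ (f(α) - f(βᵢ))` is integral. Hence `f(α)` is a root of the monic polynomial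
`∏ (X - f(βᵢ)) - ∏ (f(α) - f(βᵢ))` with integral coefficients, and so is integral itself.
-/

open Polynomial

section IsIntegral

variable {R A : Type*} [CommRing R] [CommRing A] [Algebra R A]

theorem IsIntegral.of_isIntegral_multiset_prod_sub [Nontrivial A] {s : Multiset A} (hs : s ≠ 0)
    (hs_int : ∀ z ∈ s, IsIntegral R z) {y : A} (hy : IsIntegral R (s.map (y - ·)).prod) :
    IsIntegral R y := by
  lift s to Multiset (integralClosure R A) using hs_int
  let p := (s.map fun z => X - C z).prod
  have hp : p.Monic := monic_multiset_prod_of_monic _ _ fun z _ => monic_X_sub_C z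
  have hp_deg : p.natDegree ≠ 0 := by
    rw [natDegree_multiset_prod_X_sub_C_eq_card]
    simpa using hs
  have hyp : aeval y p = ((s.map ((↑) : integralClosure R A → A)).map (y - ·)).prod := by
    simp [p, map_multiset_prod, Multiset.map_map]
  refine isIntegral_trans (A := integralClosure R A) y (IsIntegral.of_aeval_monic hp hp_deg ?_)
  rw [hyp]
  exact hy.tower_top

theorem exists_isIntegral_aeval_sub_aeval_eq_mul {α β : A} (hα : IsIntegral R α)
    (hβ : IsIntegral R β) (g : R[X]) :
    ∃ c, IsIntegral R c ∧ aeval α g - aeval β g = (α - β) * c := by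
  lift α to integralClosure R A using hα
  lift β to integralClosure R A using hβ
  obtain ⟨c, hc⟩ := sub_dvd_eval_sub α β (g.map (algebraMap R _))
  refine ⟨c, c.2, ?_⟩
  simpa [eval_map_algebraMap, aeval_algHom_apply] using congrArg Subtype.val hc

end IsIntegral

theorem Int.exists_prime_not_dvd {M : ℤ} (hM : M ≠ 0) : ∃ l : ℤ, Prime l ∧ ¬ l ∣ M := by
  obtain ⟨l, hl_gt, hl⟩ := Nat.exists_infinite_primes (M.natAbs + 1)
  refine ⟨l, Nat.prime_iff_prime_int.mp hl, fun h => ?_⟩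
  have := Nat.le_of_dvd (Int.natAbs_pos.mpr hM) (Int.natAbs_dvd_natAbs.mpr h)
  rw [Int.natAbs_natCast] at this
  omega

theorem Polynomial.Monic.exists_monic_irreducible_C_dvd_sub {P : ℤ[X]} (hP : P.Monic)
    (hP_deg : 0 < P.natDegree) {M : ℤ} (hM : M ≠ 0) :
    ∃ G : ℤ[X], G.Monic ∧ G.natDegree = P.natDegree ∧ Irreducible G ∧ C M ∣ G - P := by
  set n := P.natDegree
  obtain ⟨l, hl_prime, hl_not_dvd⟩ := Int.exists_prime_not_dvd hM
  obtain ⟨u, v, huv⟩ : IsCoprime (l ^ 2) M :=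
    ((Prime.coprime_iff_not_dvd hl_prime).mpr hl_not_dvd).pow_left
  -- `G ≡ P` modulo `M` and `G ≡ X ^ n + l` modulo `l ^ 2`, so `G` is Eisenstein at `l`.
  set G := C (u * l ^ 2) * P + C (v * M) * (X ^ n + C l)
  have hG_coeff : ∀ i, G.coeff i = u * l ^ 2 * P.coeff i +
      v * M * ((if i = n then 1 else 0) + if i = 0 then l else 0) := by
    intro i
    simp only [G, coeff_add, coeff_C_mul, coeff_X_pow, coeff_C]
  have hG_coeff_n : G.coeff n = 1 := by
    rw [hG_coeff, if_pos rfl, if_neg hP_deg.ne', hP.coeff_natDegree]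
    linear_combination huv
  have hG_le : G.natDegree ≤ n := by
    refine natDegree_add_le_of_degree_le (natDegree_C_mul_le _ _) ?_
    exact (natDegree_C_mul_le _ _).trans natDegree_X_pow_add_C.le
  have hG : G.Monic := monic_of_natDegree_le_of_coeff_eq_one n hG_le hG_coeff_n
  have hG_deg : G.natDegree = n := natDegree_eq_of_le_of_coeff_ne_zero hG_le (by simp [hG_coeff_n])
  have hG_eis : G.IsEisensteinAt (Ideal.span {l}) := by
    refine ⟨?_, fun {i} hi => ?_, ?_⟩
    · rw [hG.leadingCoeff, Ideal.mem_span_singleton]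
      exact hl_prime.not_dvd_one
    · rw [hG_coeff, if_neg (by omega), Ideal.mem_span_singleton]
      split_ifs
      · exact ⟨u * l * P.coeff i + v * M, by ring⟩
      · exact ⟨u * l * P.coeff i, by ring⟩
    · rw [Ideal.span_singleton_pow, Ideal.mem_span_singleton, hG_coeff, if_neg hP_deg.ne,
        if_pos rfl]
      intro h
      have hl_vM : l ∣ v * M := by
        have hl2 : l ^ 2 ∣ u * l ^ 2 * P.coeff 0 := ⟨u * P.coeff 0, by ring⟩
        rw [← mul_dvd_mul_iff_left hl_prime.ne_zero, ← pow_two]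
        convert (dvd_add_right hl2).mp h using 1
        ring
      exact hl_prime.not_dvd_one (huv ▸ dvd_add ⟨u * l, by ring⟩ hl_vM)
  have hG_irr : Irreducible G := hG_eis.irreducible
    ((Ideal.span_singleton_prime hl_prime.ne_zero).mpr hl_prime) hG.isPrimitive (hG_deg ▸ hP_deg)
  refine ⟨G, hG, hG_deg, hG_irr, C v * (X ^ n + C l - P), ?_⟩
  have huv' : C u * C l ^ 2 + C v * C M = 1 := by simpa using congrArg C huv
  simp only [G, map_mul, map_pow]
  linear_combination P * huv'

theorem IsIntegral.exists_monic_irreducible_aeval_eq_mul {A : Type*} [CommRing A] [Nontrivial A]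
    {α : A} (hα : IsIntegral ℤ α) {n : ℕ} (hn : (minpoly ℤ α).natDegree ≤ n) {M : ℤ}
    (hM : M ≠ 0) :
    ∃ G : ℤ[X], G.Monic ∧ G.natDegree = n ∧ Irreducible G ∧
      ∃ E : ℤ[X], aeval α G = M * aeval α E := by
  set μ := minpoly ℤ α
  have hμ : μ.Monic := minpoly.monic hα
  have hP : (μ * X ^ (n - μ.natDegree)).Monic := hμ.mul (monic_X_pow _)
  have hP_deg : (μ * X ^ (n - μ.natDegree)).natDegree = n := by
    rw [hμ.natDegree_mul (monic_X_pow _), natDegree_X_pow]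
    omega
  obtain ⟨G, hG, hG_deg, hG_irr, E, hE⟩ := hP.exists_monic_irreducible_C_dvd_sub
    ((minpoly.natDegree_pos hα).trans_le (hn.trans_eq hP_deg.symm)) hM
  refine ⟨G, hG, hG_deg.trans hP_deg, hG_irr, E, ?_⟩
  rw [← sub_add_cancel G (μ * X ^ (n - μ.natDegree)), hE]
  simp [μ]

theorem isIntegral_of_mem_roots_map {K : Type*} [CommRing K] [IsDomain K] {G : ℤ[X]}
    (hG : G.Monic) {β : K} (hβ : β ∈ (G.map (algebraMap ℤ K)).roots) : IsIntegral ℤ β :=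
  ⟨G, hG, by simpa [eval_map] using isRoot_of_mem_roots hβ⟩

theorem Polynomial.Monic.aeval_eq_prod_roots_sub {K : Type*} [Field K] [IsAlgClosed K] {G : ℤ[X]}
    (hG : G.Monic) (α : K) : aeval α G = ((G.map (algebraMap ℤ K)).roots.map (α - ·)).prod := by
  rw [← eval_map_algebraMap, (IsAlgClosed.splits _).eval_eq_prod_roots, (hG.map _).leadingCoeff,
    one_mul]

section RatAlgebra

variable {K : Type*} [Field K] [Algebra ℚ K]

theorem natDegree_minpoly_of_mem_roots_map {G : ℤ[X]} (hG : G.Monic) (hG_irr : Irreducible G)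
    {β : K} (hβ : β ∈ (G.map (algebraMap ℤ K)).roots) :
    (minpoly ℚ β).natDegree = G.natDegree := by
  have hroot : aeval β (G.map (algebraMap ℤ ℚ)) = 0 := by
    rw [aeval_map_algebraMap, aeval_def]
    simpa [eval_map] using isRoot_of_mem_roots hβ
  rw [← minpoly.eq_of_irreducible_of_monic
    (hG.irreducible_iff_irreducible_map_fraction_map.mp hG_irr) hroot (hG.map _),
    hG.natDegree_map]

theorem isIntegral_multiset_prod_aeval_sub_aeval {f : ℚ[X]} {N : ℤ} (hN : N ≠ 0) {g : ℤ[X]}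
    (hg : g.map (algebraMap ℤ ℚ) = N • f) {α : K} (hα : IsIntegral ℤ α) {s : Multiset K}
    (hs : ∀ β ∈ s, IsIntegral ℤ β) {e : K} (he : IsIntegral ℤ e)
    (hprod : (s.map (α - ·)).prod = N ^ s.card * e) :
    IsIntegral ℤ (s.map fun β => aeval α f - aeval β f).prod := by
  have hgf : ∀ x : K, aeval x g = N * aeval x f := fun x => by
    rw [← aeval_map_algebraMap ℚ, hg, map_zsmul, zsmul_eq_mul]
  choose! c hc_int hc using fun β (hβ : β ∈ s) =>
    exists_isIntegral_aeval_sub_aeval_eq_mul hα (hs β hβ) g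
  have := algebraRat.charZero K
  have hN' : (N : K) ^ s.card ≠ 0 := pow_ne_zero _ (Int.cast_ne_zero.mpr hN)
  have key : (s.map fun β => aeval α f - aeval β f).prod = e * (s.map c).prod := by
    refine mul_left_cancel₀ hN' ?_
    calc (N : K) ^ s.card * (s.map fun β => aeval α f - aeval β f).prod
        = (s.map fun β => aeval α g - aeval β g).prod := by
          simp_rw [hgf, ← mul_sub, Multiset.prod_map_mul, Multiset.map_const',
            Multiset.prod_replicate]
      _ = (s.map fun β => (α - β) * c β).prod := congrArg _ (Multiset.map_congr rfl hc)
      _ = (N : K) ^ s.card * (e * (s.map c).prod) := by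
          rw [Multiset.prod_map_mul, hprod, mul_assoc]
  rw [key]
  exact he.mul (IsIntegral.multiset_prod fun x hx => by
    obtain ⟨β, hβ, rfl⟩ := Multiset.mem_map.mp hx
    exact hc_int β hβ)

theorem isIntegral_aeval_of_natDegree_minpoly_le [IsAlgClosed K] {n : ℕ} {f : ℚ[X]}
    (hf : ∀ β : K, IsIntegral ℤ β → (minpoly ℚ β).natDegree = n → IsIntegral ℤ (aeval β f))
    {α : K} (hα : IsIntegral ℤ α) (hα_deg : (minpoly ℚ α).natDegree ≤ n) :
    IsIntegral ℤ (aeval α f) := by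
  obtain ⟨N, hN, hg⟩ := IsLocalization.integerNormalization_spec (nonZeroDivisors ℤ) f
  have hN0 : N ≠ 0 := nonZeroDivisors.ne_zero hN
  have hn : 0 < n := (minpoly.natDegree_pos hα.tower_top).trans_le hα_deg
  have hμ_deg : (minpoly ℤ α).natDegree ≤ n := by
    rwa [minpoly.isIntegrallyClosed_eq_field_fractions' ℚ hα, (minpoly.monic hα).natDegree_map]
      at hα_deg
  obtain ⟨G, hG, hG_deg, hG_irr, E, hE⟩ :=
    hα.exists_monic_irreducible_aeval_eq_mul hμ_deg (pow_ne_zero n hN0)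
  set s := (G.map (algebraMap ℤ K)).roots
  have hs_card : s.card = n := by
    rw [← (IsAlgClosed.splits _).natDegree_eq_card_roots, hG.natDegree_map, hG_deg]
  have hs_int : ∀ β ∈ s, IsIntegral ℤ β := fun β hβ => isIntegral_of_mem_roots_map hG hβ
  have hprod : (s.map (α - ·)).prod = N ^ s.card * aeval α E := by
    rw [← hG.aeval_eq_prod_roots_sub, hE, hs_card, Int.cast_pow]
  have hprod_f := isIntegral_multiset_prod_aeval_sub_aeval hN0 hg hα hs_int
    (adjoin_le_integralClosure hα (aeval_mem_adjoin_singleton ℤ α)) hprod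
  refine IsIntegral.of_isIntegral_multiset_prod_sub (s := s.map (aeval · f)) ?_ ?_
    (by rw [Multiset.map_map]; exact hprod_f)
  · simp [← Multiset.card_eq_zero, hs_card, hn.ne']
  · simp only [Multiset.mem_map, forall_exists_index, and_imp]
    rintro _ β hβ rfl
    exact hf β (hs_int β hβ) ((natDegree_minpoly_of_mem_roots_map hG hG_irr hβ).trans hG_deg)

end RatAlgebra

theorem stmt_1_general (n : ℕ) (f : Polynomial ℚ) :
    (∀ α : AlgebraicClosure ℚ, IsIntegral ℤ α → (minpoly ℚ α).natDegree = n →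
        IsIntegral ℤ (Polynomial.aeval α f)) ↔
      (∀ α : AlgebraicClosure ℚ, IsIntegral ℤ α → (minpoly ℚ α).natDegree ≤ n →
        IsIntegral ℤ (Polynomial.aeval α f)) :=
  ⟨fun hf _ hα hα_deg => isIntegral_aeval_of_natDegree_minpoly_le hf hα hα_deg,
    fun hf α hα hα_deg => hf α hα hα_deg.le⟩

/-- `Int_ℚ(A_n, 𝒜_n) = Int_ℚ(𝒜_n)`: a polynomial `f ∈ ℚ[X]` maps every
algebraic integer of degree at most `n` to an algebraic integer if and only if it maps every
algebraic integer of degree exactly `n` to an algebraic integer.  Algebraic integers are the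
elements of a fixed algebraic closure of `ℚ` that are integral over `ℤ`, and the degree of
`α` is the degree of its minimal polynomial over `ℚ`. -/
theorem stmt_1 (n : ℕ) (hn : 0 < n) (f : Polynomial ℚ) :
    (∀ α : AlgebraicClosure ℚ, IsIntegral ℤ α → (minpoly ℚ α).natDegree = n →
        IsIntegral ℤ (Polynomial.aeval α f)) ↔
      (∀ α : AlgebraicClosure ℚ, IsIntegral ℤ α → (minpoly ℚ α).natDegree ≤ n →
        IsIntegral ℤ (Polynomial.aeval α f)) :=
  stmt_1_general n f
end

section
/- Let D be a commutative ring and p ∈ D[X] a monic polynomial of degree n. Then the intersection, over all n×n matrices M over D whose characteristic polynomial equals p, of the null ideals N_{D[X]}(M) is exactly the principal ideal (p(X)) of D[X]. -/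
/-!
Cayley–Hamilton puts `p` in every null ideal. Conversely, multiplication by the root of `p` on
`D[X]/(p)`, written in the power basis `1, X, …, X^(n-1)`, is an `n × n` matrix (the companion
matrix of `p`) with characteristic polynomial `p`, and a polynomial kills it exactly when it
vanishes at the root, i.e. when it is divisible by `p`.
-/

open Polynomial

theorem Algebra.aeval_leftMulMatrix_eq_zero_iff {R S ι : Type*} [CommRing R] [Ring S] [Algebra R S]
    [Fintype ι] [DecidableEq ι] (b : Module.Basis ι R S) (x : S) (g : R[X]) :
    aeval (leftMulMatrix b x) g = 0 ↔ aeval x g = 0 := by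
  rw [aeval_algHom_apply, map_eq_zero_iff _ (leftMulMatrix_injective b)]

namespace AdjoinRoot

variable {R : Type*} [CommRing R] {p : R[X]}

theorem minpoly_root_of_monic (hp : p.Monic) : minpoly R (root p) = p := by
  refine (minpoly.unique' R (root p) hp (aeval_eq p ▸ mk_self) fun q hq => ?_).symm
  refine or_iff_not_imp_left.2 fun hq0 hroot => hq.not_ge ?_
  exact degree_le_natDegree.trans ((powerBasis' hp).dim_le_degree_of_root hq0 hroot)

noncomputable abbrev leftMulMatrixRoot (hp : p.Monic) :
    Matrix (Fin p.natDegree) (Fin p.natDegree) R :=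
  Algebra.leftMulMatrix (powerBasis' hp).basis (root p)

theorem charpoly_leftMulMatrixRoot (hp : p.Monic) : (leftMulMatrixRoot hp).charpoly = p :=
  (charpoly_leftMulMatrix (powerBasis' hp)).trans (minpoly_root_of_monic hp)

theorem aeval_leftMulMatrixRoot_eq_zero_iff (hp : p.Monic) {g : R[X]} :
    aeval (leftMulMatrixRoot hp) g = 0 ↔ p ∣ g :=
  (Algebra.aeval_leftMulMatrix_eq_zero_iff _ _ g).trans (by rw [aeval_eq, mk_eq_zero])

end AdjoinRoot

/-- Let `D` be a commutative ring and `p ∈ D[X]` a monic polynomial of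
degree `n`.  The intersection, over all `n × n` matrices `M` over `D` whose characteristic
polynomial equals `p`, of the null ideals `N_{D[X]}(M) = {g ∈ D[X] : g(M) = 0}` is exactly
the principal ideal `(p)` of `D[X]`. -/
theorem stmt_2 (D : Type*) [CommRing D] (n : ℕ) (p : Polynomial D)
    (hmonic : p.Monic) (hdeg : p.natDegree = n) :
    {g : Polynomial D | ∀ M : Matrix (Fin n) (Fin n) D, M.charpoly = p →
        Polynomial.aeval M g = 0} =
      {g : Polynomial D | g ∈ Ideal.span ({p} : Set (Polynomial D))} := by
  subst hdeg
  ext g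
  simp only [Set.mem_ofPred_eq, Ideal.mem_span_singleton]
  constructor
  · exact fun h => (AdjoinRoot.aeval_leftMulMatrixRoot_eq_zero_iff hmonic).1
      (h _ (AdjoinRoot.charpoly_leftMulMatrixRoot hmonic))
  · rintro ⟨c, rfl⟩ M hM
    have hpM := Matrix.aeval_self_charpoly M
    rw [hM] at hpM
    rw [map_mul, hpM, zero_mul]
end

section
/- Let D be an integral domain with quotient field K, let p ∈ D[X] be monic of degree n, and let f(X) = g(X)/d ∈ K[X] with g ∈ D[X] and d ∈ D nonzero. Then f ∈ Int(M_n^p(D)) (i.e., f(M) has entries in D for every n×n matrix M over D with characteristic polynomial p) if and only if g(X) is divisible by p(X) modulo dD[X], i.e., g ∈ (p(X)) + dD[X]. -/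
/-!
Writing `f = g / d`, the entries of `f(M)` are those of `g(M)` divided by `d`, and by
Cayley–Hamilton `g(M) = r(M)` for `r = g mod p`. If `d` divides every coefficient of `r`, it
divides every entry of `r(M)`. Conversely, the companion matrix of `p` has characteristic
polynomial `p`, and the first column of `r(C_p)` is the coefficient vector of `r`
(since `deg r < n`), so integrality of `f(C_p)` alone forces `d ∣ r`, i.e. `g ∈ (p, d)`.
-/

open Polynomial

namespace Polynomial

variable {R : Type*} [CommRing R]

theorem mem_span_pair_C_iff_C_dvd_modByMonic {p : R[X]} (hp : p.Monic) (g : R[X]) (d : R) :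
    g ∈ Ideal.span ({p, C d} : Set R[X]) ↔ C d ∣ g %ₘ p := by
  rw [Ideal.mem_span_pair]
  constructor
  · rintro ⟨a, b, rfl⟩
    rw [add_modByMonic, mul_self_modByMonic hp, zero_add, mul_comm, C_mul', smul_modByMonic,
      ← C_mul']
    exact dvd_mul_right _ _
  · rintro ⟨s, hs⟩
    refine ⟨g /ₘ p, s, ?_⟩
    rw [mul_comm (g /ₘ p), mul_comm s, ← hs, add_comm, modByMonic_add_div]

end Polynomial

theorem AdjoinRoot.minpoly_root_of_monic_s3 {R : Type*} [CommRing R] [Nontrivial R] {p : R[X]}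
    (hp : p.Monic) : minpoly R (root p) = p := by
  refine (minpoly.unique' R _ hp (by rw [aeval_eq, mk_self]) ?_).symm
  intro q hq
  refine or_iff_not_imp_left.mpr fun hq0 hq_root => ?_
  rw [aeval_eq, mk_eq_zero] at hq_root
  exact hp.not_dvd_of_degree_lt hq0 hq hq_root

namespace Polynomial.Monic

variable {R : Type*} [CommRing R] {p : R[X]}

noncomputable def companionMatrix (hp : p.Monic) :
    Matrix (Fin p.natDegree) (Fin p.natDegree) R :=
  Algebra.leftMulMatrix (AdjoinRoot.powerBasisAux' hp) (AdjoinRoot.root p)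

theorem charpoly_companionMatrix [Nontrivial R] (hp : p.Monic) :
    hp.companionMatrix.charpoly = p :=
  (charpoly_leftMulMatrix (AdjoinRoot.powerBasis' hp)).trans
    (AdjoinRoot.minpoly_root_of_monic_s3 hp)

theorem aeval_companionMatrix_apply_zero (hp : p.Monic) (q : R[X]) (i : Fin p.natDegree) :
    aeval hp.companionMatrix q i ⟨0, i.pos⟩ = (q %ₘ p).coeff i := by
  set B := AdjoinRoot.powerBasisAux' hp
  have h_one : B ⟨0, i.pos⟩ = 1 :=
    ((AdjoinRoot.powerBasis' hp).basis_eq_pow ⟨0, i.pos⟩).trans (pow_zero _)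
  have h_aeval : aeval (Algebra.leftMulMatrix B (AdjoinRoot.root p)) q =
      Algebra.leftMulMatrix B (AdjoinRoot.mk p q) := by
    rw [← AdjoinRoot.aeval_eq]; exact aeval_algHom_apply _ _ _
  rw [companionMatrix, h_aeval, Algebra.leftMulMatrix_eq_repr_mul, h_one, mul_one]
  exact AdjoinRoot.powerBasisAux'_repr_apply_to_fun hp _ i

theorem forall_charpoly_eq_dvd_aeval_apply_iff [Nontrivial R] (hp : p.Monic) (g : R[X]) (d : R) :
    (∀ M : Matrix (Fin p.natDegree) (Fin p.natDegree) R, M.charpoly = p →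
      ∀ i j, d ∣ aeval M g i j) ↔ C d ∣ g %ₘ p := by
  constructor
  · intro h
    rw [C_dvd_iff_dvd_coeff]
    intro k
    by_cases hk : k < p.natDegree
    · simpa only [hp.aeval_companionMatrix_apply_zero] using
        h hp.companionMatrix hp.charpoly_companionMatrix ⟨k, hk⟩ ⟨0, by omega⟩
    · rw [coeff_eq_zero_of_degree_lt]
      · exact dvd_zero d
      · exact (degree_modByMonic_lt g hp).trans_le
          (degree_le_natDegree.trans (by exact_mod_cast not_lt.mp hk))
  · rintro ⟨s, hs⟩ M hM i j
    rw [M.aeval_eq_aeval_mod_charpoly, hM, hs, C_mul', map_smul, Matrix.smul_apply, smul_eq_mul]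
    exact dvd_mul_right _ _

end Polynomial.Monic

theorem Matrix.aeval_map_C_mul_map_apply {R A ι : Type*} [CommRing R] [CommRing A] [Algebra R A]
    [Fintype ι] [DecidableEq ι] (M : Matrix ι ι R) (c : A) (q : R[X]) (i j : ι) :
    aeval (M.map (algebraMap R A)) (C c * q.map (algebraMap R A)) i j =
      c * algebraMap R A (aeval M q i j) := by
  have h_map : aeval (M.map (algebraMap R A)) q = (aeval M q).map (algebraMap R A) :=
    aeval_algHom_apply (Algebra.ofId R A).mapMatrix M q
  rw [map_mul, aeval_C, aeval_map_algebraMap, h_map, ← Algebra.smul_def, Matrix.smul_apply,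
    Matrix.map_apply, smul_eq_mul]

theorem inv_mul_mem_range_algebraMap_iff {D K : Type*} [CommRing D] [DivisionRing K]
    [Algebra D K] [FaithfulSMul D K] {d : D} (hd : d ≠ 0) (x : D) :
    (algebraMap D K d)⁻¹ * algebraMap D K x ∈ (algebraMap D K).range ↔ d ∣ x := by
  have hd' : algebraMap D K d ≠ 0 :=
    (map_ne_zero_iff _ (FaithfulSMul.algebraMap_injective D K)).mpr hd
  constructor
  · rintro ⟨c, hc⟩
    refine ⟨c, FaithfulSMul.algebraMap_injective D K ?_⟩
    rw [map_mul, hc, mul_inv_cancel_left₀ hd']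
  · rintro ⟨c, rfl⟩
    exact ⟨c, by rw [map_mul, inv_mul_cancel_left₀ hd']⟩

theorem stmt_3_general (D : Type*) [CommRing D] (K : Type*) [Field K]
    [Algebra D K] [IsFractionRing D K] (n : ℕ) (p : Polynomial D)
    (hmonic : p.Monic) (hdeg : p.natDegree = n)
    (g : Polynomial D) (d : D) (hd : d ≠ 0) :
    (∀ M : Matrix (Fin n) (Fin n) D, M.charpoly = p → ∀ i j : Fin n,
        (Polynomial.aeval (M.map (algebraMap D K))
          (Polynomial.C ((algebraMap D K d)⁻¹) * g.map (algebraMap D K))) i j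
          ∈ (algebraMap D K).range) ↔
      g ∈ Ideal.span ({p, Polynomial.C d} : Set (Polynomial D)) := by
  subst hdeg
  have : Nontrivial D := nontrivial_of_ne d 0 hd
  simp_rw [Matrix.aeval_map_C_mul_map_apply, inv_mul_mem_range_algebraMap_iff hd]
  rw [hmonic.forall_charpoly_eq_dvd_aeval_apply_iff, mem_span_pair_C_iff_C_dvd_modByMonic hmonic]

/-- Let `D` be an integral domain with quotient field `K`, let `p ∈ D[X]`
be monic of degree `n`, and let `f = g/d ∈ K[X]` with `g ∈ D[X]` and `d ∈ D` nonzero.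
Then `f ∈ Int(M_n^p(D))`, i.e. `f(M)` has all entries in `D` for every `n × n` matrix `M`
over `D` with characteristic polynomial `p`, if and only if `g` is divisible by `p`
modulo `dD[X]`, i.e. `g ∈ (p) + dD[X]` (the ideal of `D[X]` generated by `p` and `d`). -/
theorem stmt_3 (D : Type*) [CommRing D] [IsDomain D] (K : Type*) [Field K]
    [Algebra D K] [IsFractionRing D K] (n : ℕ) (p : Polynomial D)
    (hmonic : p.Monic) (hdeg : p.natDegree = n)
    (g : Polynomial D) (d : D) (hd : d ≠ 0) :
    (∀ M : Matrix (Fin n) (Fin n) D, M.charpoly = p → ∀ i j : Fin n,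
        (Polynomial.aeval (M.map (algebraMap D K))
          (Polynomial.C ((algebraMap D K d)⁻¹) * g.map (algebraMap D K))) i j
          ∈ (algebraMap D K).range) ↔
      g ∈ Ideal.span ({p, Polynomial.C d} : Set (Polynomial D)) :=
  stmt_3_general D K n p hmonic hdeg g d hd
end

section
/- Let D be an integral domain with quotient field K, and let M be an n×n matrix over D with (monic, degree n) characteristic polynomial p. Then the image set Int(M_n^p(D))(M) = {f(M) : f ∈ Int(M_n^p(D))} equals D[M] = {g(M) : g ∈ D[X]}. -/
/-!
Evaluating a polynomial `f ∈ K[X]` at the companion matrix of `p` produces, in its first column,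
the coefficients of `f mod p`. The companion matrix has characteristic polynomial `p`, so if `f`
is integer-valued on `M_n^p(D)` then `f mod p` has coefficients in `D`; by Cayley–Hamilton,
`f(M) = (f mod p)(M) ∈ D[M]`.
-/

open Polynomial

/-- Column `j` holds the coefficients of `X ^ (j + 1) mod q`: for monic `q` of degree `n` this is
the matrix of multiplication by `X` on `R[X] ⧸ (q)` in the basis `1, X, …, X ^ (n - 1)`. -/
noncomputable def companionMatrix {R : Type*} [CommRing R] (q : R[X]) (n : ℕ) :
    Matrix (Fin n) (Fin n) R :=
  Matrix.of fun i j => (X ^ ((j : ℕ) + 1) %ₘ q).coeff i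

section Companion

variable {R : Type*} [CommRing R] {q : R[X]}

theorem companionMatrix_map {S : Type*} [CommRing S] (φ : R →+* S) (hq : q.Monic) (n : ℕ) :
    (companionMatrix q n).map φ = companionMatrix (q.map φ) n := by
  ext i j
  simp only [companionMatrix, Matrix.map_apply, Matrix.of_apply]
  rw [← coeff_map, map_modByMonic φ hq, Polynomial.map_pow, map_X]

theorem AdjoinRoot.minpoly_root_of_monic_s4 (hq : q.Monic) : minpoly R (AdjoinRoot.root q) = q := by
  nontriviality R
  let pb := AdjoinRoot.powerBasis' hq
  refine eq_of_monic_of_dvd_of_natDegree_le hq (minpoly.monic pb.isIntegral_gen) ?_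
    pb.natDegree_minpoly.le
  rw [← AdjoinRoot.mk_eq_zero, ← AdjoinRoot.aeval_eq]
  exact minpoly.aeval R _

theorem AdjoinRoot.powerBasis'_repr_mk (hq : q.Monic) (r : R[X]) (i : Fin q.natDegree) :
    (AdjoinRoot.powerBasis' hq).basis.repr (AdjoinRoot.mk q r) i = (r %ₘ q).coeff i := by
  rw [← AdjoinRoot.modByMonicHom_mk hq]
  rfl

theorem companionMatrix_eq_leftMulMatrix (hq : q.Monic) :
    companionMatrix q (AdjoinRoot.powerBasis' hq).dim =
      Algebra.leftMulMatrix (AdjoinRoot.powerBasis' hq).basis (AdjoinRoot.powerBasis' hq).gen := by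
  ext i j
  rw [Algebra.leftMulMatrix_eq_repr_mul, (AdjoinRoot.powerBasis' hq).basis_eq_pow,
    AdjoinRoot.powerBasis'_gen, ← pow_succ', ← AdjoinRoot.mk_X, ← map_pow]
  exact (AdjoinRoot.powerBasis'_repr_mk hq _ i).symm

theorem charpoly_companionMatrix (hq : q.Monic) {n : ℕ} (hn : q.natDegree = n) :
    (companionMatrix q n).charpoly = q := by
  obtain rfl : (AdjoinRoot.powerBasis' hq).dim = n := hn
  rw [companionMatrix_eq_leftMulMatrix hq, charpoly_leftMulMatrix, AdjoinRoot.powerBasis'_gen,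
    AdjoinRoot.minpoly_root_of_monic_s4 hq]

theorem aeval_companionMatrix_apply_zero (hq : q.Monic) {n : ℕ} (hn : q.natDegree = n)
    (r : R[X]) (i : Fin n) (h0 : 0 < n) :
    aeval (companionMatrix q n) r i ⟨0, h0⟩ = (r %ₘ q).coeff i := by
  obtain rfl : (AdjoinRoot.powerBasis' hq).dim = n := hn
  rw [companionMatrix_eq_leftMulMatrix hq, aeval_algHom_apply, AdjoinRoot.powerBasis'_gen,
    AdjoinRoot.aeval_eq, Algebra.leftMulMatrix_eq_repr_mul,
    (AdjoinRoot.powerBasis' hq).basis_eq_pow, pow_zero, mul_one]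
  exact AdjoinRoot.powerBasis'_repr_mk hq r i

end Companion

theorem Matrix.aeval_map_algebraMap {m R S : Type*} [Fintype m] [DecidableEq m] [CommRing R]
    [CommRing S] [Algebra R S] (B : Matrix m m R) (g : R[X]) :
    aeval (B.map (algebraMap R S)) (g.map (algebraMap R S)) = (aeval B g).map (algebraMap R S) := by
  rw [Polynomial.aeval_map_algebraMap]
  exact aeval_algHom_apply (Algebra.ofId R S).mapMatrix B g

/-- The coefficients of `f mod q` form the first column of `f(C)`, `C` the companion matrix. -/
theorem modByMonic_mem_lifts_of_companionMatrix {R S : Type*} [CommRing R] [CommRing S]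
    [Nontrivial S] (φ : R →+* S) {q : R[X]} (hq : q.Monic) {n : ℕ} (hn : q.natDegree = n)
    {f : S[X]} (hf : ∀ i j, aeval ((companionMatrix q n).map φ) f i j ∈ φ.range) :
    f %ₘ q.map φ ∈ lifts φ := by
  rw [lifts_iff_coeff_lifts]
  intro k
  by_cases hk : k < n
  · have hφ := hf ⟨k, hk⟩ ⟨0, by omega⟩
    rwa [companionMatrix_map φ hq, aeval_companionMatrix_apply_zero (hq.map φ)
      ((hq.natDegree_map φ).trans hn)] at hφ
  · have hdeg : (f %ₘ q.map φ).degree < k := calc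
      _ < (q.map φ).degree := degree_modByMonic_lt f (hq.map φ)
      _ ≤ k := by
        rw [degree_eq_natDegree (hq.map φ).ne_zero, hq.natDegree_map φ, hn]
        exact_mod_cast not_lt.mp hk
    rw [coeff_eq_zero_of_degree_lt hdeg]
    exact ⟨0, map_zero φ⟩

theorem stmt_4_general (D : Type*) [CommRing D] (K : Type*) [Field K]
    [Algebra D K] (n : ℕ)
    (M : Matrix (Fin n) (Fin n) D) (p : Polynomial D) (hMp : M.charpoly = p) :
    {A : Matrix (Fin n) (Fin n) K | ∃ f : Polynomial K,
        (∀ N : Matrix (Fin n) (Fin n) D, N.charpoly = p → ∀ i j : Fin n,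
          (Polynomial.aeval (N.map (algebraMap D K)) f) i j ∈ (algebraMap D K).range) ∧
        Polynomial.aeval (M.map (algebraMap D K)) f = A} =
      {A : Matrix (Fin n) (Fin n) K | ∃ g : Polynomial D,
        (Polynomial.aeval M g).map (algebraMap D K) = A} := by
  have : Nontrivial D := (algebraMap D K).domain_nontrivial
  have hp : p.Monic := hMp ▸ M.charpoly_monic
  have hpn : p.natDegree = n := by
    rw [← hMp, Matrix.charpoly_natDegree_eq_dim, Fintype.card_fin]
  ext A
  constructor
  · rintro ⟨f, hf, rfl⟩
    obtain ⟨g, hg : g.map _ = _⟩ := modByMonic_mem_lifts_of_companionMatrix (algebraMap D K)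
      hp hpn (hf _ (charpoly_companionMatrix hp hpn))
    refine ⟨g, ?_⟩
    rw [← Matrix.aeval_map_algebraMap, hg, ← hMp, ← Matrix.charpoly_map,
      ← Matrix.aeval_eq_aeval_mod_charpoly]
  · rintro ⟨g, rfl⟩
    refine ⟨g.map (algebraMap D K), fun N _ i j => ?_, Matrix.aeval_map_algebraMap M g⟩
    rw [Matrix.aeval_map_algebraMap]
    exact ⟨aeval N g i j, rfl⟩

/-- Let `D` be an integral domain with quotient field `K`, and let `M` be an
`n × n` matrix over `D` with (monic, degree `n`) characteristic polynomial `p`.  Then the image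
set `Int(M_n^p(D))(M) = {f(M) : f ∈ Int(M_n^p(D))}` equals `D[M] = {g(M) : g ∈ D[X]}`,
where `Int(M_n^p(D))` consists of the `f ∈ K[X]` such that `f(N)` has all entries in `D`
for every `N ∈ M_n(D)` with characteristic polynomial `p`, and values `f(M)` are computed
in `M_n(K)`. -/
theorem stmt_4 (D : Type*) [CommRing D] [IsDomain D] (K : Type*) [Field K]
    [Algebra D K] [IsFractionRing D K] (n : ℕ)
    (M : Matrix (Fin n) (Fin n) D) (p : Polynomial D) (hMp : M.charpoly = p) :
    {A : Matrix (Fin n) (Fin n) K | ∃ f : Polynomial K,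
        (∀ N : Matrix (Fin n) (Fin n) D, N.charpoly = p → ∀ i j : Fin n,
          (Polynomial.aeval (N.map (algebraMap D K)) f) i j ∈ (algebraMap D K).range) ∧
        Polynomial.aeval (M.map (algebraMap D K)) f = A} =
      {A : Matrix (Fin n) (Fin n) K | ∃ g : Polynomial D,
        (Polynomial.aeval M g).map (algebraMap D K) = A} :=
  stmt_4_general D K n M p hMp
end

section
/- Let K be a number field of degree n and let O be an order of K (a subring of K which is a free ℤ-module of rank n). Let O_n = {α ∈ O : ℚ(α) = K}. Then Int(O_n, O) = Int(O); that is, every f ∈ K[X] with f(O_n) ⊆ O satisfies f(O) ⊆ O (O_n is polynomially dense in O). -/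
/-!
Fix `α ∈ O` and a primitive element `θ ∈ O` of `K/ℚ` (a primitive element of `K`, scaled by a
nonzero integer into the full lattice `O`). Since `K/ℚ` has only finitely many intermediate
fields, `α + mθ` is primitive for all large integers `m`. Hence `g(X) = f(α + Xθ)` takes values
in `O` at all large integers, and, its `(deg g + 1)`-st forward difference being zero, at all
integers; in particular `f(α) = g(0) ∈ O`.
-/

open Filter Polynomial IntermediateField fwdDiff

theorem AddSubgroup.mem_of_fwdDiff_iter_eq_zero {G : Type*} [AddCommGroup G] (S : AddSubgroup G)
    {n : ℕ} {f : ℤ → G} (hf : Δ_[1] ^[n] f = 0) {N : ℤ} (hN : ∀ m ≥ N, f m ∈ S) (m : ℤ) :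
    f m ∈ S := by
  induction n generalizing f m with
  | zero => simp [show f = 0 from hf, zero_mem]
  | succ n ih =>
    have hΔ : ∀ m, Δ_[1] f m ∈ S :=
      ih (by rwa [Function.iterate_succ_apply] at hf) fun m hm ↦
        sub_mem (hN (m + 1) (by omega)) (hN m hm)
    rcases le_or_gt N m with hm | hm
    · exact hN m hm
    · refine Int.leInductionDown (motive := fun m _ ↦ f m ∈ S) (hN N le_rfl)
        (fun k _ hk ↦ ?_) m hm.le
      simpa [fwdDiff] using sub_mem hk (hΔ (k - 1))

theorem fwdDiff_iter_comp_intCast {R G : Type*} [AddCommGroupWithOne R] [AddCommGroup G]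
    (f : R → G) (n : ℕ) : Δ_[1] ^[n] (fun m : ℤ ↦ f m) = fun m : ℤ ↦ Δ_[1] ^[n] f m := by
  ext m
  simp [fwdDiff_iter_eq_sum_shift]

theorem Polynomial.eval_intCast_mem_of_eventually {R : Type*} [CommRing R] (S : AddSubgroup R)
    (p : R[X]) (hp : ∀ᶠ m : ℤ in atTop, p.eval (m : R) ∈ S) (m : ℤ) : p.eval (m : R) ∈ S := by
  obtain ⟨N, hN⟩ := eventually_atTop.1 hp
  refine S.mem_of_fwdDiff_iter_eq_zero (n := p.natDegree + 1) ?_ hN m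
  rw [fwdDiff_iter_comp_intCast (p.eval ·), p.fwdDiff_iter_degree_add_one_eq_zero]
  rfl

theorem IntermediateField.adjoin_simple_smul_of_ne_zero {F E : Type*} [Field F] [Field E]
    [Algebra F E] {c : F} (hc : c ≠ 0) (x : E) : F⟮c • x⟯ = F⟮x⟯ := by
  refine le_antisymm (adjoin_simple_le_iff.2 (smul_mem F⟮x⟯ (mem_adjoin_simple_self F x))) ?_
  have := smul_mem F⟮c • x⟯ (mem_adjoin_simple_self F (c • x)) (x := c⁻¹)
  rwa [inv_smul_smul₀ hc, ← adjoin_simple_le_iff] at this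

theorem IntermediateField.mem_adjoin_simple_of_adjoin_simple_add_smul_eq {F E : Type*} [Field F]
    [Field E] [Algebra F E] {α β : E} {c c' : F} (hne : c ≠ c') (h : F⟮α + c • β⟯ = F⟮α + c' • β⟯) :
    β ∈ F⟮α + c • β⟯ := by
  have hmem : (c - c') • β ∈ F⟮α + c • β⟯ := by
    rw [sub_smul, ← add_sub_add_left_eq_sub _ _ α]
    refine sub_mem (mem_adjoin_simple_self F _) ?_
    rw [h]
    exact mem_adjoin_simple_self F _
  simpa [inv_smul_smul₀ (sub_ne_zero.2 hne)] using smul_mem _ hmem (x := (c - c')⁻¹)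

theorem IntermediateField.eventually_adjoin_simple_add_smul_eq_top {F E : Type*} [Field F]
    [Field E] [Algebra F E] [Finite (IntermediateField F E)] (α : E) {θ : E} (hθ : F⟮θ⟯ = ⊤) :
    ∀ᶠ c : F in cofinite, F⟮α + c • θ⟯ = ⊤ := by
  refine Set.Finite.of_finite_image (f := fun c : F ↦ F⟮α + c • θ⟯) (Set.toFinite _)
    fun c hc c' _ h ↦ ?_
  by_contra hne
  refine hc (top_le_iff.1 (hθ ▸ adjoin_simple_le_iff.2 ?_))
  exact mem_adjoin_simple_of_adjoin_simple_add_smul_eq hne h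

theorem Subring.exists_intCast_mul_mem {K : Type*} [Field K] [CharZero K] [FiniteDimensional ℚ K]
    (O : Subring K) (hO : Module.finrank ℚ K ≤ Module.finrank ℤ O) (x : K) :
    ∃ D : ℤ, D ≠ 0 ∧ (D : K) * x ∈ O := by
  have hspan : Submodule.span ℚ (O : Set K) = ⊤ := by
    have := Submodule.span_range_eq_top_of_injective_of_rank_le (K := ℚ)
      (f := O.toAddSubgroup.toIntSubmodule.subtype) Subtype.val_injective ?_
    · simpa using this
    rw [← Module.finrank_eq_rank]
    exact (Nat.cast_le.2 hO).trans (Cardinal.natCast_toNat_le _)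
  obtain ⟨y, hy, ⟨D, hD⟩, rfl⟩ :=
    (IsLocalization.mem_span_iff (nonZeroDivisors ℤ)).1 (hspan ▸ Submodule.mem_top (x := x))
  refine ⟨D, nonZeroDivisors.ne_zero hD, ?_⟩
  have hyO : y ∈ O.toAddSubgroup := by
    rw [← Submodule.span_int_eq O.toAddSubgroup]
    exact hy
  rw [IsFractionRing.mk'_eq_div, Rat.smul_def, ← mul_assoc]
  simpa [nonZeroDivisors.ne_zero hD] using hyO

theorem Subring.exists_adjoin_simple_eq_top_of_finrank_le {K : Type*} [Field K] [CharZero K]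
    [FiniteDimensional ℚ K] (O : Subring K) (hO : Module.finrank ℚ K ≤ Module.finrank ℤ O) :
    ∃ θ ∈ O, ℚ⟮θ⟯ = ⊤ := by
  obtain ⟨γ, hγ⟩ := Field.exists_primitive_element ℚ K
  obtain ⟨D, hD, hDγ⟩ := O.exists_intCast_mul_mem hO γ
  refine ⟨_, hDγ, ?_⟩
  rw [← zsmul_eq_mul, ← Int.cast_smul_eq_zsmul ℚ,
    adjoin_simple_smul_of_ne_zero (Int.cast_ne_zero.2 hD), hγ]

theorem IntermediateField.eventually_adjoin_simple_add_intCast_mul_eq_top {K : Type*} [Field K]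
    [CharZero K] [FiniteDimensional ℚ K] (α : K) {θ : K} (hθ : ℚ⟮θ⟯ = ⊤) :
    ∀ᶠ m : ℤ in atTop, ℚ⟮α + m * θ⟯ = ⊤ := by
  have : Finite (IntermediateField ℚ K) :=
    Field.finite_intermediateField_of_exists_primitive_element ℚ K ⟨θ, hθ⟩
  refine atTop_le_cofinite ((Int.cast_injective.tendsto_cofinite.eventually
    (eventually_adjoin_simple_add_smul_eq_top (F := ℚ) α hθ)).mono fun m hm ↦ ?_)
  simpa [Rat.smul_def] using hm

theorem stmt_8_general (K : Type*) [Field K] [NumberField K] (n : ℕ)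
    (hn : Module.finrank ℚ K = n)
    (O : Subring K) (hrank : Module.finrank ℤ O = n) :
    {f : Polynomial K | ∀ α : K, α ∈ O → IntermediateField.adjoin ℚ {α} = ⊤ →
        f.eval α ∈ O} =
      {f : Polynomial K | ∀ α : K, α ∈ O → f.eval α ∈ O} := by
  ext f
  refine ⟨fun hf α hα ↦ ?_, fun hf α hα _ ↦ hf α hα⟩
  obtain ⟨θ, hθO, hθ⟩ := O.exists_adjoin_simple_eq_top_of_finrank_le (hn.trans hrank.symm).le
  have hg : ∀ᶠ m : ℤ in atTop, (f.comp (C α + C θ * X)).eval (m : K) ∈ O.toAddSubgroup :=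
    (eventually_adjoin_simple_add_intCast_mul_eq_top α hθ).mono fun m hm ↦ by
      simpa [mul_comm θ] using hf _ (add_mem hα (mul_mem (intCast_mem O m) hθO)) hm
  simpa using eval_intCast_mem_of_eventually _ _ hg 0

/-- Let `K` be a number field of degree `n` and let `O` be an order of `K`
(a subring of `K` which is a free `ℤ`-module of rank `n`).  Let
`O_n = {α ∈ O : ℚ(α) = K}`.  Then `Int(O_n, O) = Int(O)`: every `f ∈ K[X]` with
`f(O_n) ⊆ O` satisfies `f(O) ⊆ O`, i.e. `O_n` is polynomially dense in `O`. -/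
theorem stmt_8 (K : Type*) [Field K] [NumberField K] (n : ℕ)
    (hn : Module.finrank ℚ K = n)
    (O : Subring K) [Module.Free ℤ O] (hrank : Module.finrank ℤ O = n) :
    {f : Polynomial K | ∀ α : K, α ∈ O → IntermediateField.adjoin ℚ {α} = ⊤ →
        f.eval α ∈ O} =
      {f : Polynomial K | ∀ α : K, α ∈ O → f.eval α ∈ O} :=
  stmt_8_general K n hn O hrank
end

section
/- Let α be an algebraic integer of degree at least 2 over ℚ. Then neither R_α = {f ∈ ℚ[X] : f(α) ∈ ℤ[α]} nor S_α = {f ∈ ℚ[X] : f(α) ∈ O_{ℚ(α)}} is a Noetherian ring; in particular the ideal M_α = p_α(X)·ℚ[X] is not finitely generated as an ideal of S_α (respectively of R_α). -/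
/-! If `M` were generated by `b₁, …, bₙ`, then writing `p * q = ∑ hᵢ * bᵢ` and `bᵢ = p * cᵢ` gives
`q(α) = ∑ hᵢ(α) * cᵢ(α)` for every `q ∈ ℚ[X]`, with each `hᵢ(α)` an algebraic integer. So `ℚ`
would lie in a finitely generated module over the algebraic integers. It does not: an integer
`N ≠ 0` making every `N * cᵢ(α)` integral makes `N * x` integral on the whole module, yet
`N * (1 / (2 * N)) = 1 / 2` is not integral over `ℤ`. -/

open Polynomial

set_option synthInstance.maxHeartbeats 1000000
set_option maxHeartbeats 1000000

/-- The ring `R_α = {f ∈ ℚ[X] : f(α) ∈ ℤ[α]}` as a subalgebra of `ℚ[X]`. -/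
noncomputable def RalphaP (α : AlgebraicClosure ℚ) : Subalgebra ℤ (Polynomial ℚ) where
  carrier := {f | Polynomial.aeval α f ∈ Algebra.adjoin ℤ {α}}
  mul_mem' := by
    intro f g hf hg
    have hf' : Polynomial.aeval α f ∈ Algebra.adjoin ℤ ({α} : Set (AlgebraicClosure ℚ)) := hf
    have hg' : Polynomial.aeval α g ∈ Algebra.adjoin ℤ ({α} : Set (AlgebraicClosure ℚ)) := hg
    show Polynomial.aeval α (f * g) ∈ Algebra.adjoin ℤ ({α} : Set (AlgebraicClosure ℚ))
    simpa [map_mul] using mul_mem hf' hg'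
  add_mem' := by
    intro f g hf hg
    have hf' : Polynomial.aeval α f ∈ Algebra.adjoin ℤ ({α} : Set (AlgebraicClosure ℚ)) := hf
    have hg' : Polynomial.aeval α g ∈ Algebra.adjoin ℤ ({α} : Set (AlgebraicClosure ℚ)) := hg
    show Polynomial.aeval α (f + g) ∈ Algebra.adjoin ℤ ({α} : Set (AlgebraicClosure ℚ))
    simpa [map_add] using add_mem hf' hg'
  algebraMap_mem' := by
    intro r
    show Polynomial.aeval α (algebraMap ℤ (Polynomial ℚ) r) ∈
      Algebra.adjoin ℤ ({α} : Set (AlgebraicClosure ℚ))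
    simpa using intCast_mem (Algebra.adjoin ℤ ({α} : Set (AlgebraicClosure ℚ))) r

/-- The ring `S_α = {f ∈ ℚ[X] : f(α) ∈ O_{ℚ(α)}}` as a subalgebra of `ℚ[X]`. -/
noncomputable def SalphaP (α : AlgebraicClosure ℚ) : Subalgebra ℤ (Polynomial ℚ) where
  carrier := {f | IsIntegral ℤ (Polynomial.aeval α f)}
  mul_mem' := by
    intro f g hf hg
    have hf' : IsIntegral ℤ (Polynomial.aeval α f) := hf
    have hg' : IsIntegral ℤ (Polynomial.aeval α g) := hg
    show IsIntegral ℤ (Polynomial.aeval α (f * g))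
    simpa [map_mul] using hf'.mul hg'
  add_mem' := by
    intro f g hf hg
    have hf' : IsIntegral ℤ (Polynomial.aeval α f) := hf
    have hg' : IsIntegral ℤ (Polynomial.aeval α g) := hg
    show IsIntegral ℤ (Polynomial.aeval α (f + g))
    simpa [map_add] using hf'.add hg'
  algebraMap_mem' := by
    intro r
    show IsIntegral ℤ (Polynomial.aeval α (algebraMap ℤ (Polynomial ℚ) r))
    rw [eq_intCast (algebraMap ℤ (Polynomial ℚ)) r, map_intCast,
      ← eq_intCast (algebraMap ℤ (AlgebraicClosure ℚ)) r]
    exact isIntegral_algebraMap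

/-- The ideal `M_α = p_α·ℚ[X]`, viewed as an ideal of `R_α`. -/
noncomputable def MalphaR (α : AlgebraicClosure ℚ) : Ideal ↥(RalphaP α) where
  carrier := {f | minpoly ℚ α ∣ (f : Polynomial ℚ)}
  add_mem' := by
    intro f g hf hg
    have hf' : minpoly ℚ α ∣ (f : Polynomial ℚ) := hf
    have hg' : minpoly ℚ α ∣ (g : Polynomial ℚ) := hg
    show minpoly ℚ α ∣ ((f + g : ↥(RalphaP α)) : Polynomial ℚ)
    push_cast
    exact dvd_add hf' hg'
  zero_mem' := by
    show minpoly ℚ α ∣ ((0 : ↥(RalphaP α)) : Polynomial ℚ)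
    push_cast
    exact dvd_zero _
  smul_mem' := by
    intro c f hf
    have hf' : minpoly ℚ α ∣ (f : Polynomial ℚ) := hf
    show minpoly ℚ α ∣ ((c • f : ↥(RalphaP α)) : Polynomial ℚ)
    rw [smul_eq_mul]
    push_cast
    exact hf'.mul_left _

/-- The ideal `M_α = p_α·ℚ[X]`, viewed as an ideal of `S_α`. -/
noncomputable def MalphaS (α : AlgebraicClosure ℚ) : Ideal ↥(SalphaP α) where
  carrier := {f | minpoly ℚ α ∣ (f : Polynomial ℚ)}
  add_mem' := by
    intro f g hf hg
    have hf' : minpoly ℚ α ∣ (f : Polynomial ℚ) := hf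
    have hg' : minpoly ℚ α ∣ (g : Polynomial ℚ) := hg
    show minpoly ℚ α ∣ ((f + g : ↥(SalphaP α)) : Polynomial ℚ)
    push_cast
    exact dvd_add hf' hg'
  zero_mem' := by
    show minpoly ℚ α ∣ ((0 : ↥(SalphaP α)) : Polynomial ℚ)
    push_cast
    exact dvd_zero _
  smul_mem' := by
    intro c f hf
    have hf' : minpoly ℚ α ∣ (f : Polynomial ℚ) := hf
    show minpoly ℚ α ∣ ((c • f : ↥(SalphaP α)) : Polynomial ℚ)
    rw [smul_eq_mul]
    push_cast
    exact hf'.mul_left _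

section IntegralSpan

variable {L : Type*} [Field L] [Algebra ℚ L] [Algebra.IsAlgebraic ℚ L]

theorem exists_int_smul_isIntegral_of_mem_span (s : Finset L) :
    ∃ N : ℤ, N ≠ 0 ∧
      ∀ x ∈ Submodule.span (integralClosure ℤ L) (s : Set L), IsIntegral ℤ (N • x) := by
  have : Algebra.IsAlgebraic ℤ L := IsFractionRing.comap_isAlgebraic_iff (K := ℚ) |>.mpr ‹_›
  obtain ⟨N, hN, hs⟩ := Algebra.IsAlgebraic.exists_integral_multiples ℤ s
  refine ⟨N, hN, fun x hx => ?_⟩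
  induction hx using Submodule.span_induction with
  | mem x hx => exact hs x hx
  | zero => simp [isIntegral_zero]
  | add x y _ _ hx hy => simpa only [smul_add] using hx.add hy
  | smul a x _ hx =>
    rw [smul_comm]
    exact a.2.mul hx

theorem exists_algebraMap_notMem_of_fg {P : Submodule (integralClosure ℤ L) L} (hP : P.FG) :
    ∃ r : ℚ, algebraMap ℚ L r ∉ P := by
  obtain ⟨s, rfl⟩ := hP
  obtain ⟨N, hN, hs⟩ := exists_int_smul_isIntegral_of_mem_span s
  refine ⟨1 / (2 * N), fun hr => ?_⟩
  have hhalf : IsIntegral ℤ ((1 : ℚ) / 2) := by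
    refine (isIntegral_algebraMap_iff (algebraMap ℚ L).injective).1 ?_
    convert hs _ hr using 1
    rw [zsmul_eq_mul, ← map_intCast (algebraMap ℚ L), ← map_mul]
    field_simp
  obtain ⟨y, hy⟩ := IsIntegrallyClosed.isIntegral_iff.1 hhalf
  have : (2 * y : ℚ) = 1 := by rw [← eq_intCast (algebraMap ℤ ℚ), hy]; norm_num
  norm_cast at this
  omega

theorem Subalgebra.not_fg_of_isIntegral_aeval (α : L) (T : Subalgebra ℤ ℚ[X])
    (hT : ∀ f ∈ T, IsIntegral ℤ (aeval α f)) {p : ℚ[X]} (hp : p ≠ 0) (hpT : ∀ q, p * q ∈ T)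
    (M : Ideal T) (hM : ∀ f : T, f ∈ M ↔ p ∣ f) : ¬ M.FG := by
  classical
  rintro ⟨s, rfl⟩
  let P := Submodule.span (integralClosure ℤ L)
    (s.image fun b : T => aeval α ((b : ℚ[X]) / p) : Set L)
  obtain ⟨r, hr⟩ := exists_algebraMap_notMem_of_fg (P := P) ⟨_, rfl⟩
  obtain ⟨h, -, hh⟩ := Submodule.mem_span_finset.1 <|
    ((hM ⟨p * C r, hpT _⟩).2 (dvd_mul_right _ _) : _ ∈ Ideal.span (s : Set T))
  have hCr : C r = ∑ b ∈ s, (h b : ℚ[X]) * (b / p) := by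
    refine mul_left_cancel₀ hp ?_
    have hb : ∀ b ∈ s, p * (b / p) = (b : ℚ[X]) := fun b hb =>
      EuclideanDomain.mul_div_cancel' hp ((hM b).1 (Ideal.subset_span hb))
    calc p * C r = ∑ b ∈ s, (h b : ℚ[X]) * b := by simpa using (congrArg Subtype.val hh).symm
      _ = _ := by
        rw [Finset.mul_sum]
        refine Finset.sum_congr rfl fun b hb' => ?_
        rw [mul_left_comm, hb b hb']
  refine hr ?_
  rw [← aeval_C, hCr, map_sum]
  refine Submodule.sum_mem _ fun b hb => ?_
  rw [map_mul]
  exact P.smul_mem ⟨_, hT _ (h b).2⟩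
    (Submodule.subset_span (Finset.mem_coe.2 (Finset.mem_image_of_mem _ hb)))

end IntegralSpan

theorem stmt_17_general (α : AlgebraicClosure ℚ) (hα : IsIntegral ℤ α) :
    ¬ IsNoetherianRing ↥(RalphaP α) ∧ ¬ IsNoetherianRing ↥(SalphaP α) ∧
      ¬ (MalphaS α).FG ∧ ¬ (MalphaR α).FG := by
  have hp : minpoly ℚ α ≠ 0 := minpoly.ne_zero hα.tower_top
  -- instance search takes `ℚ → AlgebraicClosure ℚ` from `DivisionRing.toRatAlgebra`, missing this
  have : Algebra.IsAlgebraic ℚ (AlgebraicClosure ℚ) := AlgebraicClosure.isAlgebraic ℚ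
  have hS : ¬ (MalphaS α).FG :=
    (SalphaP α).not_fg_of_isIntegral_aeval α (fun _ hf => hf) hp
      (fun q => by simp [SalphaP, isIntegral_zero]) _ fun _ => Iff.rfl
  have hR : ¬ (MalphaR α).FG :=
    (RalphaP α).not_fg_of_isIntegral_aeval α
      (fun _ hf => adjoin_le_integralClosure hα hf) hp
      (fun q => by simp [RalphaP]) _ fun _ => Iff.rfl
  exact ⟨fun h => hR ((isNoetherianRing_iff_ideal_fg _).1 h _),
    fun h => hS ((isNoetherianRing_iff_ideal_fg _).1 h _), hS, hR⟩

/-- Let `α` be an algebraic integer of degree at least `2` over `ℚ`.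
Then neither `R_α = {f ∈ ℚ[X] : f(α) ∈ ℤ[α]}` nor `S_α = {f ∈ ℚ[X] : f(α) ∈ O_{ℚ(α)}}`
is a Noetherian ring; in particular the ideal `M_α = p_α·ℚ[X]` is not finitely generated
as an ideal of `S_α` (respectively of `R_α`). -/
theorem stmt_17 (α : AlgebraicClosure ℚ) (hα : IsIntegral ℤ α)
    (hdeg : 2 ≤ (minpoly ℚ α).natDegree) :
    ¬ IsNoetherianRing ↥(RalphaP α) ∧ ¬ IsNoetherianRing ↥(SalphaP α) ∧
      ¬ (MalphaS α).FG ∧ ¬ (MalphaR α).FG :=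
  stmt_17_general α hα
end

section
/- Let p ∈ ℤ[X] be a monic irreducible polynomial, let A_α = {α = α_1, …, α_n} be the set of its roots in a splitting field F of p over ℚ, and let O_F be the ring of integers of F. Then S_α = Int_ℚ(A_α, O_F) = {f ∈ ℚ[X] : f(α_i) ∈ O_F for all i = 1, …, n}. In particular, for conjugate algebraic integers α and α′ one has S_α = S_{α′}. -/
open Polynomial

/-- Normality gives a `K`-automorphism of `L` carrying `x` to `y`; it carries `f(x)` to `f(y)`
and, being an `R`-algebra map, preserves integrality over `R`. -/
theorem IsConjRoot.isIntegral_aeval {R K L : Type*} [CommRing R] [Field K] [Field L]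
    [Algebra R K] [Algebra K L] [Algebra R L] [IsScalarTower R K L] [Normal K L]
    {x y : L} (h : IsConjRoot K x y) {f : K[X]} (hf : IsIntegral R (aeval x f)) :
    IsIntegral R (aeval y f) := by
  obtain ⟨σ, rfl⟩ := h.symm.exists_algEquiv
  rw [aeval_algEquiv]
  exact hf.map (σ.restrictScalars R)

theorem IsConjRoot.isIntegral_aeval_iff {R K L : Type*} [CommRing R] [Field K] [Field L]
    [Algebra R K] [Algebra K L] [Algebra R L] [IsScalarTower R K L] [Normal K L]
    {x y : L} (h : IsConjRoot K x y) {f : K[X]} :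
    IsIntegral R (aeval x f) ↔ IsIntegral R (aeval y f) :=
  ⟨h.isIntegral_aeval, h.symm.isIntegral_aeval⟩

/-- By Gauss's lemma `p` stays irreducible over the fraction field, so it is the minimal
polynomial of each of its roots. -/
theorem Polynomial.Monic.isConjRoot_of_aeval_eq_zero {R K A : Type*} [CommRing R] [IsDomain R]
    [IsIntegrallyClosed R] [Field K] [Algebra R K] [IsFractionRing R K] [CommRing A]
    [Nontrivial A] [Algebra R A] [Algebra K A] [IsScalarTower R K A]
    {p : R[X]} (hp : p.Monic) (hirr : Irreducible p) {x y : A}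
    (hx : aeval x p = 0) (hy : aeval y p = 0) : IsConjRoot K x y := by
  have hirrK : Irreducible (p.map (algebraMap R K)) :=
    hp.irreducible_iff_irreducible_map_fraction_map.mp hirr
  have hpK : ∀ z : A, aeval z p = 0 → p.map (algebraMap R K) = minpoly K z := fun z hz =>
    minpoly.eq_of_irreducible_of_monic hirrK (by rwa [aeval_map_algebraMap]) (hp.map _)
  exact (hpK x hx).symm.trans (hpK y hy)

/-- Let `p ∈ ℤ[X]` be a monic irreducible polynomial, let
`A_α = {α = α₁, …, αₙ}` be the set of its roots in a splitting field `F` of `p` over `ℚ`,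
and let `O_F` be the ring of integers of `F`.  Then `S_α = Int_ℚ(A_α, O_F)`:
a polynomial `f ∈ ℚ[X]` satisfies `f(α) ∈ O_{ℚ(α)}` (i.e. `f(α)` is integral over `ℤ`)
if and only if `f(β) ∈ O_F` for every root `β` of `p` in `F`.  In particular, for conjugate
roots `α, α'` of `p` one has `S_α = S_{α'}`. -/
theorem stmt_18 (p : Polynomial ℤ) (hmonic : p.Monic) (hirr : Irreducible p)
    (F : Type*) [Field F] [Algebra ℚ F]
    [Polynomial.IsSplittingField ℚ F (p.map (algebraMap ℤ ℚ))]
    (α : F) (hα : Polynomial.aeval α p = 0) :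
    {f : Polynomial ℚ | IsIntegral ℤ (Polynomial.aeval α f)} =
      {f : Polynomial ℚ | ∀ β : F, Polynomial.aeval β p = 0 →
        IsIntegral ℤ (Polynomial.aeval β f)} ∧
    ∀ α' : F, Polynomial.aeval α' p = 0 →
      {f : Polynomial ℚ | IsIntegral ℤ (Polynomial.aeval α f)} =
        {f : Polynomial ℚ | IsIntegral ℤ (Polynomial.aeval α' f)} := by
  have : Normal ℚ F := Normal.of_isSplittingField (p.map (algebraMap ℤ ℚ))
  have hconj : ∀ β : F, aeval β p = 0 → IsConjRoot ℚ α β := fun β hβ =>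
    hmonic.isConjRoot_of_aeval_eq_zero hirr hα hβ
  refine ⟨Set.ext fun f => ⟨fun hf β hβ => (hconj β hβ).isIntegral_aeval hf, fun h => h α hα⟩,
    fun α' hα' => Set.ext fun f => (hconj α' hα').isIntegral_aeval_iff⟩
end

section
/- Let n be a positive integer and let 𝒜 be any set of algebraic integers each of degree at most n over ℚ. Set R_𝒜 = ⋂_{α ∈ 𝒜} R_α and S_𝒜 = ⋂_{α ∈ 𝒜} S_α, subrings of ℚ[X] with quotient field ℚ(X). Then S_𝒜 is the integral closure of R_𝒜 in ℚ(X); in particular R_𝒜 ⊆ S_𝒜 is an integral ring extension and S_𝒜 is integrally closed. -/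
/-- `x` is integral over the subset `A` of `ℚ(X)`: it is a root of a monic polynomial all of
whose coefficients lie in `A`. -/
def IsIntegralOverSet (A : Set (RatFunc ℚ)) (x : RatFunc ℚ) : Prop :=
  ∃ q : Polynomial (RatFunc ℚ), q.Monic ∧ (∀ i, q.coeff i ∈ A) ∧ Polynomial.eval x q = 0

open Polynomial IntermediateField

noncomputable section Stmt19Aux

local notation "K" => AlgebraicClosure ℚ

namespace Stmt19Aux

lemma mem_adjoin_isIntegral {α : K} (hα : IsIntegral ℤ α) {y : K}
    (hy : y ∈ Algebra.adjoin ℤ {α}) : IsIntegral ℤ y :=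
  IsIntegral.of_mem_of_fg _ hα.fg_adjoin_singleton _ hy

/-- Integral elements over the ring `S` of "integral-valued" elements are in `S`. -/
lemma closed_lemma (𝒜 : Set K) (x : RatFunc ℚ)
    (hx : IsIntegralOverSet {x | ∃ f : Polynomial ℚ,
      algebraMap (Polynomial ℚ) (RatFunc ℚ) f = x ∧
        ∀ α ∈ 𝒜, IsIntegral ℤ (Polynomial.aeval α f)} x) :
    x ∈ {x : RatFunc ℚ | ∃ f : Polynomial ℚ,
      algebraMap (Polynomial ℚ) (RatFunc ℚ) f = x ∧
        ∀ α ∈ 𝒜, IsIntegral ℤ (Polynomial.aeval α f)} := by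
  obtain ⟨q, hqm, hqc, hqe⟩ := hx
  set ψ := algebraMap (Polynomial ℚ) (RatFunc ℚ) with hψ
  have hψinj : Function.Injective ψ := IsFractionRing.injective _ _
  have hlift : q ∈ Polynomial.lifts ψ := by
    rw [Polynomial.lifts_iff_coeff_lifts]
    intro i
    obtain ⟨f, hf, -⟩ := hqc i
    exact ⟨f, hf⟩
  obtain ⟨Q, hQmap, -, hQmonic⟩ := Polynomial.lifts_and_degree_eq_and_monic hlift hqm
  have hxint : IsIntegral (Polynomial ℚ) x := by
    refine ⟨Q, hQmonic, ?_⟩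
    rw [← Polynomial.eval_map, hQmap]; exact hqe
  obtain ⟨y, hy⟩ := IsIntegrallyClosed.isIntegral_iff.mp hxint
  have hQy : Q.eval y = 0 := by
    apply hψinj
    rw [map_zero, ← Polynomial.eval₂_at_apply, hy, ← Polynomial.eval_map, hQmap, hqe]
  refine ⟨y, hy, ?_⟩
  intro α hα
  set φ : Polynomial ℚ →+* K := (Polynomial.aeval α : Polynomial ℚ →ₐ[ℚ] K).toRingHom with hφ
  have hβ : Polynomial.eval₂ φ (φ y) Q = 0 := by
    rw [Polynomial.eval₂_at_apply, hQy, map_zero]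
  set A := integralClosure ℤ K with hA
  have hcoeff : ∀ i, (Q.map φ).coeff i ∈ Set.range (algebraMap A K) := by
    intro i
    rw [Polynomial.coeff_map]
    obtain ⟨f, hf, hfint⟩ := hqc i
    have hfc : f = Q.coeff i := by
      apply hψinj
      rw [hf, ← Polynomial.coeff_map, hQmap]
    refine ⟨⟨φ (Q.coeff i), ?_⟩, rfl⟩
    rw [← hfc]; exact hfint α hα
  have hQφlift : Q.map φ ∈ Polynomial.lifts (algebraMap A K) := by
    rw [Polynomial.lifts_iff_coeff_lifts]; exact hcoeff
  obtain ⟨Q', hQ'map, -, hQ'monic⟩ :=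
    Polynomial.lifts_and_degree_eq_and_monic hQφlift (hQmonic.map φ)
  have hint : IsIntegral A (φ y) := by
    refine ⟨Q', hQ'monic, ?_⟩
    rw [← Polynomial.eval_map, hQ'map, Polynomial.eval_map, hβ]
  exact isIntegral_trans (R := ℤ) (A := A) (φ y) hint

/-- Conductor lemma: `d^(n-1) * b^k` lies in `ℤ[α]` whenever `d*b` does
and `b` is integral of degree at most `n`. -/
lemma lemA {α b : K} (hb : IsIntegral ℤ b) {n : ℕ}
    (hdeg : (minpoly ℤ b).natDegree ≤ n)
    {d : ℤ} (hdb : (d : K) * b ∈ Algebra.adjoin ℤ {α}) :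
    ∀ k : ℕ, (d : K) ^ (n - 1) * b ^ k ∈ Algebra.adjoin ℤ {α} := by
  intro k
  induction k using Nat.strong_induction_on with
  | _ k ih =>
    rcases le_or_gt k (n-1) with hk | hk
    · have h1 : (d : K) ^ (n - 1) * b ^ k = (d:K) ^ (n - 1 - k) * ((d:K) * b) ^ k := by
        rw [mul_pow, ← mul_assoc, ← pow_add, Nat.sub_add_cancel hk]
      rw [h1]
      refine mul_mem ?_ (pow_mem hdb k)
      have h2 : ((d ^ (n-1-k) : ℤ) : K) = (d:K) ^ (n-1-k) := by push_cast; ring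
      rw [← h2]
      exact Subalgebra.intCast_mem _ _
    · have hkn : n ≤ k := by omega
      set χ := minpoly ℤ b with hχ
      have hmon : χ.Monic := minpoly.monic hb
      set e := χ.natDegree with he
      have he1 : 0 < e := minpoly.natDegree_pos hb
      have heval : (Polynomial.aeval b) χ = 0 := minpoly.aeval ℤ b
      have hsum : (b : K) ^ e = - ∑ i ∈ Finset.range e, χ.coeff i • b ^ i := by
        have h0 := Polynomial.aeval_eq_sum_range (R := ℤ) (p := χ) b
        rw [heval, ← he, Finset.sum_range_succ, hmon.coeff_natDegree, one_smul] at h0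
        rw [eq_neg_of_add_eq_zero_left h0.symm, neg_neg]
      have hek : e ≤ k := le_trans hdeg hkn
      have hbk : b ^ k = b ^ (k - e) * b ^ e := by
        rw [← pow_add, Nat.sub_add_cancel hek]
      rw [hbk, hsum]
      have key : (d:K)^(n-1) * (b^(k-e) * -∑ i ∈ Finset.range e, (χ.coeff i) • b^i)
          = -∑ i ∈ Finset.range e, (χ.coeff i) • ((d:K)^(n-1) * b^(i+(k-e))) := by
        simp only [mul_neg, Finset.mul_sum, neg_inj]
        refine Finset.sum_congr rfl fun i _ => ?_
        rw [zsmul_eq_mul, zsmul_eq_mul, pow_add]; ring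
      rw [key]
      refine neg_mem (Subalgebra.sum_mem _ fun i hi => Subalgebra.zsmul_mem _ ?_ _)
      have hilt : i < e := Finset.mem_range.mp hi
      exact ih _ (by omega)

/-- Degree bound: values of polynomials at `α` have degree bounded by that of `α`. -/
lemma degree_bound {α : K} (hα : IsIntegral ℤ α) {n : ℕ}
    (hdegα : (minpoly ℚ α).natDegree ≤ n) (f : Polynomial ℚ)
    (hb : IsIntegral ℤ (Polynomial.aeval α f)) :
    (minpoly ℤ (Polynomial.aeval α f)).natDegree ≤ n := by
  set b := Polynomial.aeval α f with hbdef
  have hαQ : IsIntegral ℚ α := hα.tower_top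
  have hbQ : IsIntegral ℚ b := hb.tower_top
  have h1 : (minpoly ℚ b).natDegree = (minpoly ℤ b).natDegree := by
    rw [minpoly.isIntegrallyClosed_eq_field_fractions' ℚ hb]
    exact (minpoly.monic hb).natDegree_map _
  rw [← h1]
  have hfd : FiniteDimensional ℚ ℚ⟮α⟯ := IntermediateField.adjoin.finiteDimensional hαQ
  set β : ℚ⟮α⟯ := Polynomial.aeval (IntermediateField.AdjoinSimple.gen ℚ α) f with hβ
  have hβb : algebraMap ℚ⟮α⟯ K β = b := by
    rw [hβ, ← Polynomial.aeval_algebraMap_apply, IntermediateField.AdjoinSimple.algebraMap_gen]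
  have h2 : minpoly ℚ b = minpoly ℚ β := by
    rw [← hβb]
    exact minpoly.algebraMap_eq (algebraMap ℚ⟮α⟯ K).injective β
  rw [h2]
  calc (minpoly ℚ β).natDegree ≤ Module.finrank ℚ ℚ⟮α⟯ := minpoly.natDegree_le β
    _ = (minpoly ℚ α).natDegree := IntermediateField.adjoin.finrank hαQ
    _ ≤ n := hdegα

/-- The monic integer polynomial of degree `n` with prescribed lower coefficients. -/
def Qpoly (n N : ℕ) (v : Fin n → Fin N) : Polynomial ℤ :=
  X ^ n + ∑ i : Fin n, C ((v i : ℕ) : ℤ) * X ^ (i : ℕ)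

lemma Qpoly_sum_degree_lt (n N : ℕ) (v : Fin n → Fin N) :
    (∑ i : Fin n, (C ((v i : ℕ) : ℤ) * X ^ (i : ℕ))).degree < (n : WithBot ℕ) := by
  apply lt_of_le_of_lt (Polynomial.degree_sum_le _ _)
  refine (Finset.sup_lt_iff (WithBot.bot_lt_coe n)).mpr ?_
  intro i _
  refine lt_of_le_of_lt (Polynomial.degree_C_mul_X_pow_le _ _) ?_
  exact WithBot.coe_lt_coe.mpr i.2

lemma Qpoly_monic (n N : ℕ) (v : Fin n → Fin N) : (Qpoly n N v).Monic :=
  Polynomial.monic_X_pow_add (Qpoly_sum_degree_lt n N v)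

lemma Qpoly_natDegree (n N : ℕ) (v : Fin n → Fin N) : (Qpoly n N v).natDegree = n := by
  have h := Polynomial.degree_add_eq_left_of_degree_lt
    (p := (X ^ n : Polynomial ℤ)) (q := ∑ i : Fin n, C ((v i : ℕ) : ℤ) * X ^ (i : ℕ))
    (by rw [Polynomial.degree_X_pow]; exact Qpoly_sum_degree_lt n N v)
  have h2 : (Qpoly n N v).degree = (n : WithBot ℕ) := by
    rw [Qpoly, h, Polynomial.degree_X_pow]
  exact Polynomial.natDegree_eq_of_degree_eq_some h2

lemma Qpoly_coeff_lt (n N : ℕ) (v : Fin n → Fin N) (i : Fin n) :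
    (Qpoly n N v).coeff (i : ℕ) = ((v i : ℕ) : ℤ) := by
  rw [Qpoly, Polynomial.coeff_add, Polynomial.coeff_X_pow,
    Polynomial.finset_sum_coeff]
  have h : ∀ j : Fin n, (C ((v j : ℕ) : ℤ) * X ^ (j : ℕ)).coeff (i : ℕ)
      = if j = i then ((v i : ℕ) : ℤ) else 0 := by
    intro j
    rw [Polynomial.coeff_C_mul_X_pow]
    by_cases h : j = i
    · simp [h]
    · have hne : (i : ℕ) ≠ (j : ℕ) := fun hc => h (Fin.ext hc.symm)
      simp [hne, h]
  rw [Finset.sum_congr rfl (fun j _ => h j), Finset.sum_ite_eq' Finset.univ i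
    (fun _ => ((v i : ℕ) : ℤ))]
  have hne : (i : ℕ) ≠ n := Nat.ne_of_lt i.2
  simp [hne]

lemma Qpoly_coeff_ge (n N : ℕ) (v : Fin n → Fin N) (i : ℕ) (hi : n ≤ i) :
    (Qpoly n N v).coeff i = if i = n then 1 else 0 := by
  by_cases h : i = n
  · have hcn := (Qpoly_monic n N v).coeff_natDegree
    rw [Qpoly_natDegree] at hcn
    rw [h, hcn]
    simp
  · have hlt : (Qpoly n N v).natDegree < i := by
      rw [Qpoly_natDegree]; omega
    simp [h, Polynomial.coeff_eq_zero_of_natDegree_lt hlt]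

/-- The universal monic integer polynomial killing all residue classes. -/
def Pbig (n N : ℕ) : Polynomial ℤ := ∏ v : Fin n → Fin N, Qpoly n N v

lemma Pbig_monic (n N : ℕ) : (Pbig n N).Monic :=
  Polynomial.monic_prod_of_monic _ _ (fun v _ => Qpoly_monic n N v)

lemma Pbig_natDegree_pos (n N : ℕ) (hn : 0 < n) (hN : 0 < N) : 0 < (Pbig n N).natDegree := by
  classical
  have : NeZero N := ⟨hN.ne'⟩
  rw [Pbig, Polynomial.natDegree_prod _ _ (fun v _ => (Qpoly_monic n N v).ne_zero)]
  obtain ⟨v, hv⟩ := (Finset.univ_nonempty : (Finset.univ : Finset (Fin n → Fin N)).Nonempty)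
  refine Finset.sum_pos' (fun i _ => Nat.zero_le _) ⟨v, hv, ?_⟩
  rw [Qpoly_natDegree]; exact hn

/-- Key valuation: `Pbig` takes values in `ℤ[α]`. -/
lemma aeval_Pbig_mem {α b : K} (hb : IsIntegral ℤ b) {n : ℕ} (hn : 0 < n)
    (hdeg : (minpoly ℤ b).natDegree ≤ n) {d : ℤ} (hd : d ≠ 0)
    (hdb : (d : K) * b ∈ Algebra.adjoin ℤ {α}) :
    Polynomial.aeval b (Pbig n (d ^ (n-1)).natAbs) ∈ Algebra.adjoin ℤ {α} := by
  classical
  set D : ℤ := d ^ (n - 1) with hD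
  set N : ℕ := D.natAbs with hNdef
  have hD0 : D ≠ 0 := pow_ne_zero _ hd
  have hN : 0 < N := Int.natAbs_pos.mpr hD0
  set χ := minpoly ℤ b with hχ
  have hmon : χ.Monic := minpoly.monic hb
  set e := χ.natDegree with he
  set χ' : Polynomial ℤ := X ^ (n - e) * χ with hχ'
  have hmon' : χ'.Monic := (Polynomial.monic_X_pow _).mul hmon
  have hdeg' : χ'.natDegree = n := by
    rw [hχ', (Polynomial.monic_X_pow _).natDegree_mul hmon, Polynomial.natDegree_X_pow]
    omega
  have heval' : Polynomial.aeval b χ' = 0 := by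
    rw [hχ', map_mul, minpoly.aeval, mul_zero]
  have hvlt : ∀ i : Fin n, (χ'.coeff (i : ℕ) % (N : ℤ)).toNat < N := by
    intro i
    have h1 := Int.emod_nonneg (χ'.coeff (i : ℕ)) (by exact_mod_cast hN.ne' : (N:ℤ) ≠ 0)
    have h2 := Int.emod_lt_of_pos (χ'.coeff (i : ℕ)) (by exact_mod_cast hN : (0:ℤ) < N)
    omega
  set v₀ : Fin n → Fin N := fun i => ⟨(χ'.coeff (i : ℕ) % (N : ℤ)).toNat, hvlt i⟩ with hv₀
  have hdvd : ∀ i : ℕ, D ∣ (Qpoly n N v₀ - χ').coeff i := by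
    intro i
    rw [Polynomial.coeff_sub]
    rcases lt_or_ge i n with hi | hi
    · have h3 : (Qpoly n N v₀).coeff i = ((v₀ ⟨i, hi⟩ : ℕ) : ℤ) := by
        have := Qpoly_coeff_lt n N v₀ ⟨i, hi⟩
        simpa using this
      rw [h3]
      have hcast : ((v₀ ⟨i, hi⟩ : ℕ) : ℤ) = χ'.coeff i % (N : ℤ) := by
        simp only [hv₀]
        exact Int.toNat_of_nonneg (Int.emod_nonneg _ (by exact_mod_cast hN.ne'))
      rw [hcast]
      have h4 : χ'.coeff i % (N : ℤ) - χ'.coeff i = -((N:ℤ) * (χ'.coeff i / (N:ℤ))) := by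
        rw [Int.emod_def]; ring
      rw [h4]
      refine dvd_neg.mpr (Dvd.dvd.mul_right ?_ _)
      exact Int.natAbs_dvd.mp dvd_rfl
    · rw [Qpoly_coeff_ge n N v₀ i hi]
      by_cases h : i = n
      · have hc : χ'.coeff n = 1 := by
          have := hmon'.coeff_natDegree; rw [hdeg'] at this; exact this
        rw [h, hc]
        simp
      · have hc0 : χ'.coeff i = 0 :=
          Polynomial.coeff_eq_zero_of_natDegree_lt (by rw [hdeg']; omega)
        simp [h, hc0]
  obtain ⟨E, hE⟩ := (Polynomial.C_dvd_iff_dvd_coeff D (Qpoly n N v₀ - χ')).mpr hdvd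
  have hsplit : Pbig n N = Qpoly n N v₀ * ∏ v ∈ Finset.univ.erase v₀, Qpoly n N v := by
    rw [Pbig, ← Finset.mul_prod_erase Finset.univ _ (Finset.mem_univ v₀)]
  have hQv₀ : Polynomial.aeval b (Qpoly n N v₀) = (D : K) * Polynomial.aeval b E := by
    have h5 : Qpoly n N v₀ = χ' + C D * E := by rw [← hE]; ring
    rw [h5, map_add, heval', zero_add, map_mul, Polynomial.aeval_C]
    simp [algebraMap_int_eq]
  set H : Polynomial ℤ := E * ∏ v ∈ Finset.univ.erase v₀, Qpoly n N v with hH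
  have hPb : Polynomial.aeval b (Pbig n N) = (D : K) * Polynomial.aeval b H := by
    rw [hsplit, map_mul, hQv₀, hH, map_mul, mul_assoc]
  rw [hPb]
  rw [Polynomial.aeval_eq_sum_range (p := H) b, Finset.mul_sum]
  refine Subalgebra.sum_mem _ fun i _ => ?_
  have h6 : (D : K) * (H.coeff i • b ^ i) = H.coeff i • ((d : K) ^ (n-1) * b ^ i) := by
    rw [zsmul_eq_mul, zsmul_eq_mul, hD]
    push_cast
    ring
  rw [h6]
  exact Subalgebra.zsmul_mem _ (lemA hb hdeg hdb i) _

/-- Hard direction: every element of `S` is integral over `R`. -/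
lemma hard_dir (n : ℕ) (hn : 0 < n) (𝒜 : Set K)
    (h𝒜 : ∀ α ∈ 𝒜, IsIntegral ℤ α ∧ (minpoly ℚ α).natDegree ≤ n)
    (x : RatFunc ℚ)
    (hx : ∃ f : Polynomial ℚ, algebraMap (Polynomial ℚ) (RatFunc ℚ) f = x ∧
        ∀ α ∈ 𝒜, IsIntegral ℤ (Polynomial.aeval α f)) :
    IsIntegralOverSet {x | ∃ f : Polynomial ℚ,
      algebraMap (Polynomial ℚ) (RatFunc ℚ) f = x ∧
        ∀ α ∈ 𝒜, Polynomial.aeval α f ∈ Algebra.adjoin ℤ {α}} x := by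
  classical
  obtain ⟨f, hf, hvals⟩ := hx
  obtain ⟨dd, hdd⟩ := IsLocalization.integerNormalization_map_to_map (nonZeroDivisors ℤ)
    (S := ℚ) f
  set g : Polynomial ℤ := IsLocalization.integerNormalization (nonZeroDivisors ℤ) f with hg
  set d : ℤ := (dd : ℤ) with hd
  have hd0 : d ≠ 0 := nonZeroDivisors.coe_ne_zero dd
  set N : ℕ := (d ^ (n-1)).natAbs with hN
  have hN0 : 0 < N := Int.natAbs_pos.mpr (pow_ne_zero _ hd0)
  set P : Polynomial ℤ := Pbig n N with hP
  set ψ := algebraMap (Polynomial ℚ) (RatFunc ℚ) with hψ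
  set Pf : Polynomial ℚ := Polynomial.aeval f P with hPf
  -- the values (d:K) * (aeval α f) lie in ℤ[α]
  have hdb : ∀ α ∈ 𝒜, (d : K) * Polynomial.aeval α f ∈ Algebra.adjoin ℤ {α} := by
    intro α hα
    have h1 : Polynomial.aeval α (g.map (algebraMap ℤ ℚ)) = Polynomial.aeval α ((d : ℤ) • f) := by
      rw [hdd]
    rw [Polynomial.aeval_map_algebraMap] at h1
    have h2 : Polynomial.aeval α ((d : ℤ) • f) = (d : K) * Polynomial.aeval α f := by
      rw [map_zsmul, zsmul_eq_mul]
    rw [h2] at h1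
    rw [← h1]
    rw [Algebra.adjoin_singleton_eq_range_aeval]
    exact ⟨g, rfl⟩
  -- the values of Pf lie in ℤ[α]
  have hPfval : ∀ α ∈ 𝒜, Polynomial.aeval α Pf ∈ Algebra.adjoin ℤ {α} := by
    intro α hα
    have h3 : Polynomial.aeval α Pf
        = Polynomial.aeval (Polynomial.aeval α f) P := by
      rw [hPf]
      exact (Polynomial.aeval_algHom_apply
        ((Polynomial.aeval α : Polynomial ℚ →ₐ[ℚ] K).restrictScalars ℤ) f P).symm
    rw [h3]
    exact aeval_Pbig_mem (hvals α hα) hn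
      (degree_bound (h𝒜 α hα).1 (h𝒜 α hα).2 f (hvals α hα)) hd0 (hdb α hα)
  -- the monic polynomial witnessing integrality
  refine ⟨P.map (Int.castRingHom (RatFunc ℚ)) - C (ψ Pf), ?_, ?_, ?_⟩
  · -- monic
    have h1 : (P.map (Int.castRingHom (RatFunc ℚ))).Monic := (Pbig_monic n N).map _
    have h2 : (-C (ψ Pf)).degree < (P.map (Int.castRingHom (RatFunc ℚ))).degree := by
      rw [Polynomial.degree_neg]
      refine lt_of_le_of_lt Polynomial.degree_C_le ?_
      rw [(Pbig_monic n N).degree_map]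
      exact Polynomial.natDegree_pos_iff_degree_pos.mp (Pbig_natDegree_pos n N hn hN0)
    have := h1.add_of_left h2
    rwa [← sub_eq_add_neg] at this
  · -- coefficients lie in R
    intro i
    refine ⟨Polynomial.C ((P.coeff i : ℚ)) - (if i = 0 then Pf else 0), ?_, ?_⟩
    · rw [map_sub, Polynomial.coeff_sub, Polynomial.coeff_map, Polynomial.coeff_C]
      congr 1
      · rw [show ψ (Polynomial.C ((P.coeff i : ℚ))) = ψ ((P.coeff i : Polynomial ℚ)) by
          norm_cast]
        rw [map_intCast]
        rfl
      · split
        · rfl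
        · rw [map_zero]
    · intro α hα
      rw [map_sub]
      refine sub_mem ?_ ?_
      · rw [show Polynomial.C ((P.coeff i : ℚ)) = ((P.coeff i : Polynomial ℚ)) by norm_cast]
        rw [map_intCast]
        exact Subalgebra.intCast_mem _ _
      · split
        · exact hPfval α hα
        · rw [map_zero]; exact Subalgebra.zero_mem _
  · -- evaluates to zero at x
    rw [Polynomial.eval_sub, Polynomial.eval_C]
    have h4 : Polynomial.eval x (P.map (Int.castRingHom (RatFunc ℚ)))
        = ψ (Polynomial.eval f (P.map (Int.castRingHom (Polynomial ℚ)))) := by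
      rw [show (Int.castRingHom (RatFunc ℚ)) = ψ.comp (Int.castRingHom (Polynomial ℚ)) from
        RingHom.ext_int _ _, ← Polynomial.map_map, ← hf, Polynomial.eval_map,
        Polynomial.eval₂_at_apply]
    have h5 : Polynomial.eval f (P.map (Int.castRingHom (Polynomial ℚ))) = Pf := by
      rw [hPf, Polynomial.aeval_def, ← Polynomial.eval_map]
      exact congrArg (fun φ : ℤ →+* Polynomial ℚ => Polynomial.eval f (P.map φ))
        (RingHom.ext_int _ _)
    rw [h4, h5, sub_self]

end Stmt19Aux


/-- Let `n` be a positive integer and let `𝒜` be any set of algebraic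
integers (elements of a fixed algebraic closure of `ℚ` integral over `ℤ`) each of degree at
most `n` over `ℚ`.  With `R_𝒜 = ⋂_{α ∈ 𝒜} R_α` and `S_𝒜 = ⋂_{α ∈ 𝒜} S_α`, viewed inside
their common quotient field `ℚ(X) = RatFunc ℚ`, `S_𝒜` is the integral closure of `R_𝒜`
in `ℚ(X)`; in particular `R_𝒜 ⊆ S_𝒜` is an integral ring extension and `S_𝒜` is
integrally closed. -/
theorem stmt_19 (n : ℕ) (hn : 0 < n) (𝒜 : Set (AlgebraicClosure ℚ))
    (h𝒜 : ∀ α ∈ 𝒜, IsIntegral ℤ α ∧ (minpoly ℚ α).natDegree ≤ n) :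
    let R : Set (RatFunc ℚ) := {x | ∃ f : Polynomial ℚ,
      algebraMap (Polynomial ℚ) (RatFunc ℚ) f = x ∧
        ∀ α ∈ 𝒜, Polynomial.aeval α f ∈ Algebra.adjoin ℤ {α}}
    let S : Set (RatFunc ℚ) := {x | ∃ f : Polynomial ℚ,
      algebraMap (Polynomial ℚ) (RatFunc ℚ) f = x ∧
        ∀ α ∈ 𝒜, IsIntegral ℤ (Polynomial.aeval α f)}
    ({x : RatFunc ℚ | IsIntegralOverSet R x} = S) ∧ R ⊆ S ∧
      (∀ x : RatFunc ℚ, IsIntegralOverSet S x → x ∈ S) := by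
  intro R S
  have hRS : R ⊆ S := by
    rintro x ⟨f, hf, hvals⟩
    exact ⟨f, hf, fun α hα =>
      Stmt19Aux.mem_adjoin_isIntegral (h𝒜 α hα).1 (hvals α hα)⟩
  refine ⟨?_, hRS, fun x hx => Stmt19Aux.closed_lemma 𝒜 x hx⟩
  ext x
  constructor
  · intro hx
    refine Stmt19Aux.closed_lemma 𝒜 x ?_
    obtain ⟨q, hqm, hqc, hqe⟩ := hx
    exact ⟨q, hqm, fun i => hRS (hqc i), hqe⟩
  · intro hx
    exact Stmt19Aux.hard_dir n hn 𝒜 h𝒜 x hx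
end Stmt19Aux
end
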